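/- arXiv:1905.13659 — 6 statements merged into one kernel-verified Lean document; each statement's English description precedes it below -/
import Mathlib

section
/- Let g : ℝ^d → ℝ be a bounded measurable function. Then E[g(X⁺)] = 2·E[F_Y(Y)·g(X)]. -/
open MeasureTheory ProbabilityTheory

/-!
The pair `((X, Y), (X', Y'))` has law `ν ⊗ ν`, where `ν` is the law of `(X, Y)`. Split
`g(X⁺) = 1{Y' ≤ Y} g(X) + 1{Y < Y'} g(X')`. Exchanging the two copies turns the second term into
the first, except on the tie event `{Y = Y'}`, which is null because the law of `Y` is atomless.
Integrating out the losing copy in `1{Y' ≤ Y} g(X)` (Fubini) leaves `F_Y(Y) g(X)`.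
-/

section
variable {β : Type*} [MeasurableSpace β] {f : β → ℝ}

theorem measure_prod_setOf_eq_eq_zero {μ ν : Measure β} [SFinite ν] (hf : Measurable f)
    (hν : ∀ t, ν {b | f b = t} = 0) : (μ.prod ν) {p | f p.1 = f p.2} = 0 := by
  have hdiag : MeasurableSet {p : β × β | f p.1 = f p.2} :=
    measurableSet_eq_fun (hf.comp measurable_fst) (hf.comp measurable_snd)
  have hsec (a : β) : ν (Prod.mk a ⁻¹' {p | f p.1 = f p.2}) = 0 := by
    simpa [Set.preimage, eq_comm] using hν (f a)
  rw [Measure.prod_apply hdiag]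
  simp only [hsec, lintegral_zero]

theorem integrable_prod_ite_le {μ ν : Measure β} [IsFiniteMeasure ν] (hf : Measurable f)
    {g : β → ℝ} (hg : Integrable g μ) :
    Integrable (fun p : β × β => if f p.2 ≤ f p.1 then g p.1 else 0) (μ.prod ν) :=
  ((hg.comp_fst ν).indicator (measurableSet_le (hf.comp measurable_snd)
    (hf.comp measurable_fst))).congr (ae_of_all _ fun p => by simp [Set.indicator_apply])

theorem integral_prod_ite_le {μ ν : Measure β} [SFinite μ] [IsFiniteMeasure ν]
    (hf : Measurable f) {g : β → ℝ} (hg : Integrable g μ) :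
    ∫ p, (if f p.2 ≤ f p.1 then g p.1 else 0) ∂(μ.prod ν)
      = ∫ a, ν.real {b | f b ≤ f a} * g a ∂μ := by
  rw [integral_prod _ (integrable_prod_ite_le hf hg)]
  congr 1 with a
  have hsec : MeasurableSet {b | f b ≤ f a} := measurableSet_le hf measurable_const
  simpa [Set.indicator_apply, mul_comm] using integral_indicator_const (μ := ν) (g a) hsec

theorem measurable_measureReal_setOf_le (ν : Measure β) [IsFiniteMeasure ν] (f : β → ℝ) :
    Measurable fun t => ν.real {b | f b ≤ t} :=
  Monotone.measurable fun _ _ hst => measureReal_mono fun _ hb => le_trans hb hst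

theorem integral_comp_ite_le_prod_self {ν : Measure β} [IsFiniteMeasure ν] (hf : Measurable f)
    (hν : ∀ t, ν {b | f b = t} = 0) {g : β → ℝ} (hg : Integrable g ν) :
    ∫ p, g (if f p.2 ≤ f p.1 then p.1 else p.2) ∂(ν.prod ν)
      = 2 * ∫ a, ν.real {b | f b ≤ f a} * g a ∂ν := by
  set G : β × β → ℝ := fun p => if f p.2 ≤ f p.1 then g p.1 else 0
  have hties : ∀ᵐ p ∂(ν.prod ν), f p.1 ≠ f p.2 := by
    simpa [ae_iff] using measure_prod_setOf_eq_eq_zero hf hν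
  have hsplit : (fun p => g (if f p.2 ≤ f p.1 then p.1 else p.2)) =ᵐ[ν.prod ν]
      fun p => G p + G p.swap := by
    filter_upwards [hties] with p hp
    rcases hp.lt_or_gt with h | h <;> simp [G, h.le, h.not_ge]
  have hG : Integrable G (ν.prod ν) := integrable_prod_ite_le hf hg
  rw [integral_congr_ae hsplit, integral_add (g := fun p : β × β => G p.swap) hG hG.swap,
    integral_prod_swap G, integral_prod_ite_le hf hg, two_mul]

end

/-- For a bounded measurable `g`, `E[g(X⁺)] = 2 E[F_Y(Y) g(X)]`, where
`X⁺` is the winner of the pairwise comparison built from two independent identically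
distributed copies `(X, Y)`, `(X', Y')`, and `F_Y` is the CDF of `Y` (law of `Y` atomless). -/
theorem stmt_0
    {Ω : Type*} [MeasurableSpace Ω] {μ : Measure Ω} [IsProbabilityMeasure μ]
    {d : ℕ} {X X' : Ω → (Fin d → ℝ)} {Y Y' : Ω → ℝ}
    (hX : Measurable X) (hY : Measurable Y) (hX' : Measurable X') (hY' : Measurable Y')
    (hindep : IndepFun (fun ω => (X ω, Y ω)) (fun ω => (X' ω, Y' ω)) μ)
    (hident : μ.map (fun ω => (X ω, Y ω)) = μ.map (fun ω => (X' ω, Y' ω)))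
    (hatomless : ∀ t : ℝ, μ {ω | Y ω = t} = 0)
    (g : (Fin d → ℝ) → ℝ) (hg : Measurable g)
    (M : ℝ) (hgM : ∀ x, |g x| ≤ M) :
    ∫ ω, g (if Y' ω ≤ Y ω then X ω else X' ω) ∂μ
      = 2 * ∫ ω, (μ {ω' | Y ω' ≤ Y ω}).toReal * g (X ω) ∂μ := by
  have hXY : Measurable fun ω => (X ω, Y ω) := hX.prodMk hY
  have hXY' : Measurable fun ω => (X' ω, Y' ω) := hX'.prodMk hY'
  set ν := μ.map fun ω => (X ω, Y ω)
  have hjoint : μ.map (fun ω => ((X ω, Y ω), (X' ω, Y' ω))) = ν.prod ν := by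
    rw [(indepFun_iff_map_prod_eq_prod_map_map hXY.aemeasurable hXY'.aemeasurable).mp hindep,
      ← hident]
  have hcdf (t : ℝ) : μ {ω | Y ω ≤ t} = ν {b | b.2 ≤ t} :=
    (Measure.map_apply hXY (measurable_snd measurableSet_Iic)).symm
  have hνatom (t : ℝ) : ν {b | b.2 = t} = 0 :=
    (Measure.map_apply hXY (measurable_snd (measurableSet_singleton t))).trans (hatomless t)
  have hgν : Integrable (fun b => g b.1) ν :=
    .of_bound (hg.comp measurable_fst).aestronglyMeasurable M (ae_of_all _ fun b => hgM b.1)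
  calc ∫ ω, g (if Y' ω ≤ Y ω then X ω else X' ω) ∂μ
      = ∫ p, g (if p.2.2 ≤ p.1.2 then p.1 else p.2).1 ∂(ν.prod ν) := by
        rw [← hjoint, integral_map (hXY.prodMk hXY').aemeasurable]
        · simp only [apply_ite Prod.fst]
        · exact (hg.comp (Measurable.ite (measurableSet_le (measurable_snd.snd)
            (measurable_fst.snd)) measurable_fst measurable_snd).fst).aestronglyMeasurable
    _ = 2 * ∫ b, ν.real {b' | b'.2 ≤ b.2} * g b.1 ∂ν :=
        integral_comp_ite_le_prod_self measurable_snd hνatom hgν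
    _ = 2 * ∫ ω, (μ {ω' | Y ω' ≤ Y ω}).toReal * g (X ω) ∂μ := by
        rw [integral_map hXY.aemeasurable]
        · simp only [hcdf, measureReal_def]
        · exact (((measurable_measureReal_setOf_le ν Prod.snd).comp measurable_snd).mul
            (hg.comp measurable_fst)).aestronglyMeasurable
end

section
/- Let g : ℝ^d → ℝ be a bounded measurable function. Then E[g(X⁻)] = 2·E[(1 − F_Y(Y))·g(X)]. -/
/-! Write `Z = (X, Y)` and score points by `f = Prod.snd`. The point with the smaller score
equals `Z'` on `{f Z' ≤ f Z}` and `Z` on `{f Z < f Z'}`. On the law `ν ⊗ ν` of `(Z, Z')`, Fubini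
turns the second piece into `∫ ν{b | f a < f b} g(a) dν(a)`, and after swapping the coordinates
the first piece gives the same integral with `≤` in place of `<`; the two agree because `f Z` has
no atoms. Finally `ν{b | t < f b} = 1 - F_Y(t)`. -/

open MeasureTheory ProbabilityTheory Set

theorem comp_ite_le_eq_indicator_swap_add_indicator {α E : Type*} [AddZeroClass E]
    (f : α → ℝ) (g : α → E) :
    (fun p : α × α => g (if f p.2 ≤ f p.1 then p.2 else p.1))
      = fun p => {p : α × α | f p.1 ≤ f p.2}.indicator (fun p => g p.1) p.swap
          + {p : α × α | f p.1 < f p.2}.indicator (fun p => g p.1) p := by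
  funext p
  by_cases h : f p.2 ≤ f p.1
  · simp [h, not_lt.mpr h]
  · simp [h, not_le.mp h]

section

variable {Ω α β E : Type*} [MeasurableSpace Ω] [MeasurableSpace α] [MeasurableSpace β]
  [NormedAddCommGroup E]

theorem measure_le_eq_measure_lt {ν : Measure α} {f : α → ℝ} {t : ℝ}
    (ht : ν (f ⁻¹' {t}) = 0) : ν {b | t ≤ f b} = ν {b | t < f b} := by
  have : {b | t ≤ f b} = {b | t < f b} ∪ f ⁻¹' {t} := by
    ext b; simp [le_iff_lt_or_eq, eq_comm]
  rw [this]
  exact measure_congr (union_ae_eq_left_of_ae_eq_empty (ae_eq_empty.mpr ht))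

theorem integrable_prod_comp_ite_le {ν : Measure α} [IsFiniteMeasure ν] {f : α → ℝ}
    (hf : Measurable f) {g : α → E} (hg : Integrable g ν) :
    Integrable (fun p : α × α => g (if f p.2 ≤ f p.1 then p.2 else p.1)) (ν.prod ν) := by
  rw [comp_ite_le_eq_indicator_swap_add_indicator]
  exact ((hg.comp_fst ν).indicator (measurableSet_le (by fun_prop) (by fun_prop))).swap.add
    ((hg.comp_fst ν).indicator (measurableSet_lt (by fun_prop) (by fun_prop)))

variable [NormedSpace ℝ E]

theorem IndepFun.integral_comp_prodMk_eq_integral_prod {μ : Measure Ω} [IsProbabilityMeasure μ]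
    {Z Z' : Ω → α} (hZ : AEMeasurable Z μ) (hZ' : AEMeasurable Z' μ) (hindep : IndepFun Z Z' μ)
    (hident : μ.map Z = μ.map Z') {F : α × α → E}
    (hF : AEStronglyMeasurable F ((μ.map Z).prod (μ.map Z))) :
    ∫ ω, F (Z ω, Z' ω) ∂μ = ∫ p, F p ∂((μ.map Z).prod (μ.map Z)) := by
  have hjoint : μ.map (fun ω => (Z ω, Z' ω)) = (μ.map Z).prod (μ.map Z) := by
    rw [(indepFun_iff_map_prod_eq_prod_map_map hZ hZ').mp hindep, ← hident]
  rw [← hjoint, integral_map (hZ.prodMk hZ') (hjoint ▸ hF)]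

variable [CompleteSpace E]

theorem integral_prod_indicator_comp_fst {μ : Measure α} {ν : Measure β} [SFinite μ]
    [IsFiniteMeasure ν] {s : Set (α × β)} (hs : MeasurableSet s) {g : α → E}
    (hg : Integrable g μ) :
    ∫ p, s.indicator (fun p => g p.1) p ∂(μ.prod ν) = ∫ a, ν.real (Prod.mk a ⁻¹' s) • g a ∂μ := by
  rw [integral_prod _ ((hg.comp_fst ν).indicator hs)]
  refine integral_congr_ae (Filter.Eventually.of_forall fun a => ?_)
  exact integral_indicator_const (g a) (measurable_prodMk_left hs)

theorem integral_prod_comp_ite_le {ν : Measure α} [IsFiniteMeasure ν] {f : α → ℝ}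
    (hf : Measurable f) (hatom : ∀ t, ν (f ⁻¹' {t}) = 0) {g : α → E} (hg : Integrable g ν) :
    ∫ p, g (if f p.2 ≤ f p.1 then p.2 else p.1) ∂(ν.prod ν)
      = (2 : ℝ) • ∫ a, ν.real {b | f a < f b} • g a ∂ν := by
  have hT : MeasurableSet {p : α × α | f p.1 ≤ f p.2} :=
    measurableSet_le (by fun_prop) (by fun_prop)
  have hS : MeasurableSet {p : α × α | f p.1 < f p.2} :=
    measurableSet_lt (by fun_prop) (by fun_prop)
  have hTint : Integrable (fun p : α × α => {p : α × α | f p.1 ≤ f p.2}.indicator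
      (fun p => g p.1) p.swap) (ν.prod ν) := ((hg.comp_fst ν).indicator hT).swap
  rw [comp_ite_le_eq_indicator_swap_add_indicator,
    integral_add hTint ((hg.comp_fst ν).indicator hS),
    integral_prod_swap, integral_prod_indicator_comp_fst hT hg,
    integral_prod_indicator_comp_fst hS hg, two_smul]
  simp only [preimage_ofPred_eq, measureReal_def, measure_le_eq_measure_lt (hatom _)]

theorem IndepFun.integral_comp_ite_le {μ : Measure Ω} [IsProbabilityMeasure μ] {Z Z' : Ω → α}
    (hZ : Measurable Z) (hZ' : Measurable Z') (hindep : IndepFun Z Z' μ)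
    (hident : μ.map Z = μ.map Z') {f : α → ℝ} (hf : Measurable f)
    (hatom : ∀ t, μ {ω | f (Z ω) = t} = 0) {g : α → E} (hg : Integrable g (μ.map Z)) :
    ∫ ω, g (if f (Z' ω) ≤ f (Z ω) then Z' ω else Z ω) ∂μ
      = (2 : ℝ) • ∫ ω, μ.real {ω' | f (Z ω) < f (Z ω')} • g (Z ω) ∂μ := by
  set ν := μ.map Z
  have hatomν (t : ℝ) : ν (f ⁻¹' {t}) = 0 := by
    rw [Measure.map_apply hZ (hf (measurableSet_singleton t))]
    exact hatom t
  have hsurv : Measurable fun t => ν.real {b | t < f b} :=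
    Antitone.measurable fun s t hst => measureReal_mono fun b h => lt_of_le_of_lt hst h
  have hweight : AEStronglyMeasurable (fun a => ν.real {b | f a < f b} • g a) ν :=
    (hsurv.comp hf).aestronglyMeasurable.smul hg.1
  rw [IndepFun.integral_comp_prodMk_eq_integral_prod hZ.aemeasurable hZ'.aemeasurable hindep
      hident (integrable_prod_comp_ite_le hf hg).1, integral_prod_comp_ite_le hf hatomν hg,
    integral_map hZ.aemeasurable hweight]
  simp only [ν, map_measureReal_apply hZ (measurableSet_lt measurable_const hf)]
  rfl

end

/-- For a bounded measurable `g`, `E[g(X⁻)] = 2 E[(1 - F_Y(Y)) g(X)]`. -/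
theorem stmt_1
    {Ω : Type*} [MeasurableSpace Ω] {μ : Measure Ω} [IsProbabilityMeasure μ]
    {d : ℕ} {X X' : Ω → (Fin d → ℝ)} {Y Y' : Ω → ℝ}
    (hX : Measurable X) (hY : Measurable Y) (hX' : Measurable X') (hY' : Measurable Y')
    (hindep : IndepFun (fun ω => (X ω, Y ω)) (fun ω => (X' ω, Y' ω)) μ)
    (hident : μ.map (fun ω => (X ω, Y ω)) = μ.map (fun ω => (X' ω, Y' ω)))
    (hatomless : ∀ t : ℝ, μ {ω | Y ω = t} = 0)
    (g : (Fin d → ℝ) → ℝ) (hg : Measurable g)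
    (M : ℝ) (hgM : ∀ x, |g x| ≤ M) :
    ∫ ω, g (if Y' ω ≤ Y ω then X' ω else X ω) ∂μ
      = 2 * ∫ ω, (1 - (μ {ω' | Y ω' ≤ Y ω}).toReal) * g (X ω) ∂μ := by
  have hgint : Integrable (fun a : (Fin d → ℝ) × ℝ => g a.1) (μ.map fun ω => (X ω, Y ω)) :=
    .of_bound (hg.comp measurable_fst).aestronglyMeasurable M (.of_forall fun a => hgM a.1)
  have hsurv (t : ℝ) : μ.real {ω | t < Y ω} = 1 - (μ {ω | Y ω ≤ t}).toReal := by
    change _ = 1 - μ.real _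
    rw [← probReal_compl_eq_one_sub (measurableSet_le hY measurable_const)]
    congr 1
    ext ω
    simp
  have key := IndepFun.integral_comp_ite_le (hX.prodMk hY) (hX'.prodMk hY') hindep hident
    measurable_snd hatomless hgint
  simpa only [apply_ite Prod.fst, hsurv, smul_eq_mul] using key
end

section
/- Suppose the law of Y is the uniform distribution on [a, b] with a < b. Then for every λ ∈ ℝ and every measurable h : ℝ^d → ℝ with φ'(h(X)) bounded and all integrals finite, R_linear(h; λ, b/2, a/2) = R(h); that is, the approximated risk with weights (w₁, w₂) = (b/2, a/2) equals the true risk for any value of the free parameter λ. -/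
/-!
By Fubini, `E g(X⁺) = 2 E[F(Y) g(X)]`: given `(X, Y)` the first draw wins with probability
`F(Y)`, and, `Y` having no atoms, so does the second given `(X', Y')`. Since `{X⁺, X⁻} = {X, X'}`,
`E g(X⁺) + E g(X⁻) = 2 E g(X)`. For `Y` uniform on `[a, b]` we have `(b - a) F(Y) + a = Y`, so
`(b/2 - λ/2) E g(X⁺) + (a/2 - λ/2) E g(X⁻) = E[(Y - λ) g(X)]`; with `g = φ' ∘ h` this is exactly
the gap between `R_linear` and the Bregman risk `E[φ(Y) - φ(h X) - (Y - h X) φ'(h X)]`.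
-/

open MeasureTheory ProbabilityTheory Set

section PairComparison

variable {β : Type*}

noncomputable def pairUpper (s : β → ℝ) (z : β × β) : β := if s z.2 ≤ s z.1 then z.1 else z.2

noncomputable def pairLower (s : β → ℝ) (z : β × β) : β := if s z.2 ≤ s z.1 then z.2 else z.1

lemma fst_pairUpper_snd {α : Type*} (x x' : α) (y y' : ℝ) :
    (pairUpper Prod.snd ((x, y), (x', y'))).1 = if y' ≤ y then x else x' :=
  apply_ite Prod.fst _ _ _

lemma fst_pairLower_snd {α : Type*} (x x' : α) (y y' : ℝ) :
    (pairLower Prod.snd ((x, y), (x', y'))).1 = if y' ≤ y then x' else x :=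
  apply_ite Prod.fst _ _ _

lemma comp_pairUpper_eq_piecewise (g s : β → ℝ) :
    (fun z => g (pairUpper s z)) =
      {z | s z.2 ≤ s z.1}.piecewise (fun z => g z.1) (fun z => g z.2) := by
  ext z
  simp only [pairUpper, Set.piecewise, Set.mem_ofPred_eq, apply_ite g]

lemma comp_pairLower_eq_piecewise (g s : β → ℝ) :
    (fun z => g (pairLower s z)) =
      {z | s z.2 ≤ s z.1}.piecewise (fun z => g z.2) (fun z => g z.1) := by
  ext z
  simp only [pairLower, Set.piecewise, Set.mem_ofPred_eq, apply_ite g]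

variable [MeasurableSpace β] {s g : β → ℝ}

lemma measurableSet_comp_snd_le_comp_fst (hs : Measurable s) :
    MeasurableSet {z : β × β | s z.2 ≤ s z.1} :=
  measurableSet_le (hs.comp measurable_snd) (hs.comp measurable_fst)

lemma measurable_pairUpper (hs : Measurable s) : Measurable (pairUpper s) :=
  Measurable.ite (measurableSet_comp_snd_le_comp_fst hs) measurable_fst measurable_snd

lemma measurable_pairLower (hs : Measurable s) : Measurable (pairLower s) :=
  Measurable.ite (measurableSet_comp_snd_le_comp_fst hs) measurable_snd measurable_fst

lemma setIntegral_prod_comp_fst {ν₁ ν₂ : Measure β} [IsFiniteMeasure ν₁] [IsFiniteMeasure ν₂]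
    {T : Set (β × β)} (hT : MeasurableSet T) (hg : Integrable g ν₁) :
    ∫ z in T, g z.1 ∂(ν₁.prod ν₂) = ∫ x, ν₂.real (Prod.mk x ⁻¹' T) * g x ∂ν₁ := by
  rw [← integral_indicator hT, integral_prod _ ((hg.comp_fst ν₂).indicator hT)]
  congr with x
  exact integral_indicator_const (g x) (hT.preimage measurable_prodMk_left)

lemma setIntegral_prod_comp_snd {ν₁ ν₂ : Measure β} [IsFiniteMeasure ν₁] [IsFiniteMeasure ν₂]
    {T : Set (β × β)} (hT : MeasurableSet T) (hg : Integrable g ν₂) :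
    ∫ z in T, g z.2 ∂(ν₁.prod ν₂) = ∫ y, ν₁.real ((fun x => (x, y)) ⁻¹' T) * g y ∂ν₂ := by
  rw [← integral_indicator hT, integral_prod_symm _ ((hg.comp_snd ν₁).indicator hT)]
  congr with y
  exact integral_indicator_const (g y) (hT.preimage measurable_prodMk_right)

variable {ν : Measure β} [IsProbabilityMeasure ν]

lemma measureReal_le_eq_cdf_map (hs : Measurable s) (t : ℝ) :
    ν.real {x | s x ≤ t} = cdf (ν.map s) t := by
  have := Measure.isProbabilityMeasure_map (μ := ν) hs.aemeasurable
  rw [cdf_eq_real, map_measureReal_apply hs measurableSet_Iic]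
  rfl

lemma measureReal_lt_eq_cdf_map [NullSingletonClass (ν.map s)] (hs : Measurable s) (t : ℝ) :
    ν.real {x | s x < t} = cdf (ν.map s) t := by
  have := Measure.isProbabilityMeasure_map (μ := ν) hs.aemeasurable
  rw [cdf_eq_real, ← measureReal_congr Iio_ae_eq_Iic, map_measureReal_apply hs measurableSet_Iio]
  rfl

lemma integral_comp_pairUpper_prod [NullSingletonClass (ν.map s)] (hs : Measurable s)
    (hg : Integrable g ν) :
    ∫ z, g (pairUpper s z) ∂(ν.prod ν) = 2 * ∫ x, cdf (ν.map s) (s x) * g x ∂ν := by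
  have hT := measurableSet_comp_snd_le_comp_fst hs
  rw [comp_pairUpper_eq_piecewise, integral_piecewise hT (hg.comp_fst ν).integrableOn
    (hg.comp_snd ν).integrableOn, setIntegral_prod_comp_fst hT hg,
    setIntegral_prod_comp_snd hT.compl hg, two_mul]
  congr 2 with x
  · exact congrArg (· * g x) (measureReal_le_eq_cdf_map hs (s x))
  · have : (fun y => (y, x)) ⁻¹' {z : β × β | s z.2 ≤ s z.1}ᶜ = {y | s y < s x} := by
      ext y
      simp
    rw [this, measureReal_lt_eq_cdf_map hs]

lemma integral_comp_pairUpper_add_pairLower_prod (hs : Measurable s) (hg : Integrable g ν) :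
    ∫ z, g (pairUpper s z) ∂(ν.prod ν) + ∫ z, g (pairLower s z) ∂(ν.prod ν)
      = 2 * ∫ x, g x ∂ν := by
  have hT := measurableSet_comp_snd_le_comp_fst hs
  have hupper : Integrable (fun z => g (pairUpper s z)) (ν.prod ν) := by
    rw [comp_pairUpper_eq_piecewise]
    exact Integrable.piecewise hT (hg.comp_fst ν).integrableOn (hg.comp_snd ν).integrableOn
  have hlower : Integrable (fun z => g (pairLower s z)) (ν.prod ν) := by
    rw [comp_pairLower_eq_piecewise]
    exact Integrable.piecewise hT (hg.comp_snd ν).integrableOn (hg.comp_fst ν).integrableOn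
  have hsum : ∀ z, g (pairUpper s z) + g (pairLower s z) = g z.1 + g z.2 := by
    intro z
    unfold pairUpper pairLower
    split_ifs <;> ring
  rw [← integral_add hupper hlower, funext hsum, integral_add (hg.comp_fst ν) (hg.comp_snd ν),
    integral_fun_fst, integral_fun_snd, probReal_univ, one_smul, two_mul]

end PairComparison

section UniformIcc

noncomputable def uniformIcc (a b : ℝ) : Measure ℝ :=
  (ENNReal.ofReal (b - a))⁻¹ • volume.restrict (Icc a b)

variable {a b t : ℝ}

instance nullSingletonClass_uniformIcc : NullSingletonClass (uniformIcc a b) :=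
  ⟨fun t => by simp [uniformIcc]⟩

lemma ae_mem_Icc_uniformIcc : ∀ᵐ t ∂uniformIcc a b, t ∈ Icc a b :=
  Measure.ae_smul_measure (ae_restrict_mem measurableSet_Icc) _

lemma uniformIcc_Iic (ht : t ∈ Icc a b) :
    uniformIcc a b (Iic t) = (ENNReal.ofReal (b - a))⁻¹ * ENNReal.ofReal (t - a) := by
  have hinter : Iic t ∩ Icc a b = Icc a t := by
    ext x
    simp only [mem_inter_iff, mem_Iic, mem_Icc]
    exact ⟨fun h => ⟨h.2.1, h.1⟩, fun h => ⟨h.2, h.1, h.2.trans ht.2⟩⟩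
  rw [uniformIcc, Measure.smul_apply, Measure.restrict_apply measurableSet_Iic, hinter,
    Real.volume_Icc, smul_eq_mul]

lemma isProbabilityMeasure_uniformIcc (hab : a < b) : IsProbabilityMeasure (uniformIcc a b) :=
  ⟨by rw [uniformIcc, Measure.smul_apply, Measure.restrict_apply_univ, Real.volume_Icc,
    smul_eq_mul, ENNReal.inv_mul_cancel (by simpa using hab) ENNReal.ofReal_ne_top]⟩

lemma cdf_uniformIcc (hab : a < b) (ht : t ∈ Icc a b) :
    cdf (uniformIcc a b) t = (t - a) / (b - a) := by
  have := isProbabilityMeasure_uniformIcc hab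
  rw [cdf_eq_real, measureReal_def, uniformIcc_Iic ht, ENNReal.toReal_mul, ENNReal.toReal_inv,
    ENNReal.toReal_ofReal (sub_nonneg.2 hab.le), ENNReal.toReal_ofReal (sub_nonneg.2 ht.1),
    div_eq_inv_mul]

lemma integrable_of_map_eq_uniformIcc {Ω : Type*} [MeasurableSpace Ω] {μ : Measure Ω}
    {Y : Ω → ℝ} (hab : a < b) (hY : Measurable Y) (hlaw : μ.map Y = uniformIcc a b) :
    Integrable Y μ := by
  have hid : Integrable id (μ.map Y) := by
    rw [hlaw]
    exact Integrable.smul_measure (μ := volume.restrict (Icc a b))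
      continuous_id.integrableOn_Icc (by simpa using hab)
  exact (integrable_map_measure aestronglyMeasurable_id hY.aemeasurable).1 hid

lemma ae_cdf_uniformIcc (hab : a < b) :
    ∀ᵐ t ∂uniformIcc a b, (b - a) * cdf (uniformIcc a b) t + a = t :=
  ae_mem_Icc_uniformIcc.mono fun t ht => by
    rw [cdf_uniformIcc hab ht]
    field_simp [(sub_pos.2 hab).ne']
    ring

end UniformIcc

lemma integral_comp_pairUpper_pairLower_uniformIcc_prod {β : Type*} [MeasurableSpace β]
    {ν : Measure β} [IsProbabilityMeasure ν] {s g : β → ℝ} {a b : ℝ} (hab : a < b)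
    (hs : Measurable s) (hνs : ν.map s = uniformIcc a b) (hg : Integrable g ν) (lam : ℝ) :
    (b / 2 - lam / 2) * ∫ z, g (pairUpper s z) ∂(ν.prod ν)
      + (a / 2 - lam / 2) * ∫ z, g (pairLower s z) ∂(ν.prod ν) = ∫ x, (s x - lam) * g x ∂ν := by
  have : NullSingletonClass (ν.map s) := hνs ▸ inferInstance
  have hlower := integral_comp_pairUpper_add_pairLower_prod hs hg
  rw [← eq_sub_iff_add_eq'] at hlower
  rw [hlower, integral_comp_pairUpper_prod hs hg, hνs]
  set F := fun x => cdf (uniformIcc a b) (s x)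
  have hF : ∀ᵐ x ∂ν, (b - a) * F x + a = s x :=
    ae_of_ae_map (p := fun t => (b - a) * cdf (uniformIcc a b) t + a = t) hs.aemeasurable
      (by rw [hνs]; exact ae_cdf_uniformIcc hab)
  have hFg : Integrable (fun x => F x * g x) ν :=
    hg.bdd_mul ((monotone_cdf _).measurable.comp hs).aestronglyMeasurable (ae_of_all _ fun x => by
      rw [Real.norm_eq_abs, abs_of_nonneg (cdf_nonneg _ _)]
      exact cdf_le_one _ _)
  calc _ = (b - a) * ∫ x, F x * g x ∂ν + (a - lam) * ∫ x, g x ∂ν := by ring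
    _ = ∫ x, ((b - a) * F x + a - lam) * g x ∂ν := by
      rw [← integral_const_mul, ← integral_const_mul,
        ← integral_add (hFg.const_mul _) (hg.const_mul _)]
      congr with x
      ring
    _ = ∫ x, (s x - lam) * g x ∂ν :=
      integral_congr_ae (hF.mono fun x hx => congrArg (fun y => (y - lam) * g x) hx)

lemma integral_comp_prodMk_of_indepFun {Ω β : Type*} [MeasurableSpace Ω] [MeasurableSpace β]
    {μ : Measure Ω} [IsFiniteMeasure μ] {Z Z' : Ω → β} (hZ : Measurable Z) (hZ' : Measurable Z')
    (hindep : IndepFun Z Z' μ) (hident : μ.map Z = μ.map Z') {G : β × β → ℝ}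
    (hG : AEStronglyMeasurable G ((μ.map Z).prod (μ.map Z))) :
    ∫ ω, G (Z ω, Z' ω) ∂μ = ∫ z, G z ∂((μ.map Z).prod (μ.map Z)) := by
  have hjoint : μ.map (fun ω => (Z ω, Z' ω)) = (μ.map Z).prod (μ.map Z) := by
    rw [(indepFun_iff_map_prod_eq_prod_map_map hZ.aemeasurable hZ'.aemeasurable).1 hindep, hident]
  rw [← integral_map (hZ.prodMk hZ').aemeasurable (hjoint ▸ hG), hjoint]

lemma integral_comp_pairUpper_pairLower_uniformIcc {Ω β : Type*} [MeasurableSpace Ω]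
    [MeasurableSpace β] {μ : Measure Ω} [IsProbabilityMeasure μ] {Z Z' : Ω → β} {s g : β → ℝ}
    {a b : ℝ} (hab : a < b) (hZ : Measurable Z) (hZ' : Measurable Z') (hindep : IndepFun Z Z' μ)
    (hident : μ.map Z = μ.map Z') (hs : Measurable s)
    (hlaw : μ.map (fun ω => s (Z ω)) = uniformIcc a b) (hg : Measurable g)
    (hgZ : Integrable (fun ω => g (Z ω)) μ) (lam : ℝ) :
    (b / 2 - lam / 2) * ∫ ω, g (pairUpper s (Z ω, Z' ω)) ∂μ
      + (a / 2 - lam / 2) * ∫ ω, g (pairLower s (Z ω, Z' ω)) ∂μ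
      = ∫ ω, (s (Z ω) - lam) * g (Z ω) ∂μ := by
  have := Measure.isProbabilityMeasure_map (μ := μ) hZ.aemeasurable
  rw [integral_comp_prodMk_of_indepFun (G := fun z => g (pairUpper s z)) hZ hZ' hindep hident
      (hg.comp (measurable_pairUpper hs)).aestronglyMeasurable,
    integral_comp_prodMk_of_indepFun (G := fun z => g (pairLower s z)) hZ hZ' hindep hident
      (hg.comp (measurable_pairLower hs)).aestronglyMeasurable,
    integral_comp_pairUpper_pairLower_uniformIcc_prod hab hs (by rwa [Measure.map_map hs hZ])
      ((integrable_map_measure hg.aestronglyMeasurable hZ.aemeasurable).2 hgZ) lam]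
  exact integral_map hZ.aemeasurable ((hs.sub_const lam).mul hg).aestronglyMeasurable

theorem stmt_5_general
    {Ω : Type*} [MeasurableSpace Ω] {μ : Measure Ω} [IsProbabilityMeasure μ]
    {d : ℕ} {X X' : Ω → (Fin d → ℝ)} {Y Y' : Ω → ℝ}
    (hX : Measurable X) (hY : Measurable Y) (hX' : Measurable X') (hY' : Measurable Y')
    (hindep : IndepFun (fun ω => (X ω, Y ω)) (fun ω => (X' ω, Y' ω)) μ)
    (hident : μ.map (fun ω => (X ω, Y ω)) = μ.map (fun ω => (X' ω, Y' ω)))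
    (a b : ℝ) (hab : a < b)
    (hlaw : μ.map Y = (ENNReal.ofReal (b - a))⁻¹ • (volume.restrict (Set.Icc a b)))
    (φ : ℝ → ℝ)
    (h : (Fin d → ℝ) → ℝ) (hh : Measurable h)
    (M : ℝ) (hM : ∀ x, |deriv φ (h x)| ≤ M)
    (hintφY : Integrable (fun ω => φ (Y ω)) μ)
    (hintφh : Integrable (fun ω => φ (h (X ω))) μ)
    (hinth : Integrable (fun ω => h (X ω) * deriv φ (h (X ω))) μ)
    (lam : ℝ) :
    (∫ ω, φ (Y ω) ∂μ)
      - (∫ ω, (φ (h (X ω)) - (h (X ω) - lam) * deriv φ (h (X ω))) ∂μ)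
      - (b / 2 - lam / 2) * (∫ ω, deriv φ (h (if Y' ω ≤ Y ω then X ω else X' ω)) ∂μ)
      - (a / 2 - lam / 2) * (∫ ω, deriv φ (h (if Y' ω ≤ Y ω then X' ω else X ω)) ∂μ)
      = ∫ ω, (φ (Y ω) - φ (h (X ω)) - (Y ω - h (X ω)) * deriv φ (h (X ω))) ∂μ := by
  have hgX : Integrable (fun ω => deriv φ (h (X ω))) μ :=
    .of_bound ((measurable_deriv φ).comp (hh.comp hX)).aestronglyMeasurable M
      (ae_of_all _ fun ω => hM _)
  have key := integral_comp_pairUpper_pairLower_uniformIcc (s := Prod.snd)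
    (g := fun p => deriv φ (h p.1)) hab (hX.prodMk hY) (hX'.prodMk hY') hindep hident
    measurable_snd hlaw ((measurable_deriv φ).comp (hh.comp measurable_fst)) hgX lam
  simp only [fst_pairUpper_snd, fst_pairLower_snd] at key
  have hYgX : Integrable (fun ω => (Y ω - lam) * deriv φ (h (X ω))) μ :=
    ((integrable_of_map_eq_uniformIcc hab hY hlaw).sub (integrable_const lam)).mul_bdd
      hgX.aestronglyMeasurable (ae_of_all _ fun ω => hM _)
  have hlin : Integrable (fun ω => φ (h (X ω)) - (h (X ω) - lam) * deriv φ (h (X ω))) μ :=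
    (hintφh.sub (hinth.sub (hgX.const_mul lam))).congr
      (ae_of_all _ fun ω => by simp only [Pi.sub_apply]; ring)
  have hφYlin : Integrable
      (fun ω => φ (Y ω) - (φ (h (X ω)) - (h (X ω) - lam) * deriv φ (h (X ω)))) μ :=
    hintφY.sub hlin
  rw [sub_sub, key, ← integral_sub hintφY hlin, ← integral_sub hφYlin hYgX]
  congr with ω
  ring

/-- If the law of `Y` is uniform on `[a, b]` (`a < b`), then for every
`λ ∈ ℝ` and every measurable model `h` with bounded `φ'(h(X))` and all integrals finite,
the approximated risk `R_linear(h; λ, b/2, a/2)` equals the true Bregman risk `R(h)`. -/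
theorem stmt_5
    {Ω : Type*} [MeasurableSpace Ω] {μ : Measure Ω} [IsProbabilityMeasure μ]
    {d : ℕ} {X X' : Ω → (Fin d → ℝ)} {Y Y' : Ω → ℝ}
    (hX : Measurable X) (hY : Measurable Y) (hX' : Measurable X') (hY' : Measurable Y')
    (hindep : IndepFun (fun ω => (X ω, Y ω)) (fun ω => (X' ω, Y' ω)) μ)
    (hident : μ.map (fun ω => (X ω, Y ω)) = μ.map (fun ω => (X' ω, Y' ω)))
    (a b : ℝ) (hab : a < b)
    (hlaw : μ.map Y = (ENNReal.ofReal (b - a))⁻¹ • (volume.restrict (Set.Icc a b)))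
    (φ : ℝ → ℝ) (hφdiff : Differentiable ℝ φ) (hφconv : ConvexOn ℝ Set.univ φ)
    (h : (Fin d → ℝ) → ℝ) (hh : Measurable h)
    (M : ℝ) (hM : ∀ x, |deriv φ (h x)| ≤ M)
    (hintφY : Integrable (fun ω => φ (Y ω)) μ)
    (hintφh : Integrable (fun ω => φ (h (X ω))) μ)
    (hinth : Integrable (fun ω => h (X ω) * deriv φ (h (X ω))) μ)
    (lam : ℝ) :
    (∫ ω, φ (Y ω) ∂μ)
      - (∫ ω, (φ (h (X ω)) - (h (X ω) - lam) * deriv φ (h (X ω))) ∂μ)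
      - (b / 2 - lam / 2) * (∫ ω, deriv φ (h (if Y' ω ≤ Y ω then X ω else X' ω)) ∂μ)
      - (a / 2 - lam / 2) * (∫ ω, deriv φ (h (if Y' ω ≤ Y ω then X' ω else X ω)) ∂μ)
      = ∫ ω, (φ (Y ω) - φ (h (X ω)) - (Y ω - h (X ω)) * deriv φ (h (X ω))) ∂μ :=
  stmt_5_general hX hY hX' hY' hindep hident a b hab hlaw φ h hh M hM hintφY hintφh hinth lam
end

section
/- Let H be a set of measurable functions h : ℝ^d → ℝ with |φ'(h(x))| ≤ M for all h ∈ H and all x ∈ ℝ^d. Fix λ, w₁, w₂ ∈ ℝ. Let R̂ : H → ℝ be any function (an empirical estimate of R_linear) such that sup_{h ∈ H} |R_linear(h; λ, w₁, w₂) − R̂(h)| ≤ ε. Let ĥ ∈ H satisfy R̂(ĥ) ≤ R̂(h) for all h ∈ H, and let h* ∈ H satisfy R(h*) ≤ R(h) for all h ∈ H. Then R(ĥ) ≤ R(h*) + 2ε + 2M·Err(w₁, w₂). -/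
open MeasureTheory ProbabilityTheory

/-- The true Bregman risk `R(h) = E[d_φ(Y, h(X))]`. -/
noncomputable def trueRisk {Ω : Type*} [MeasurableSpace Ω] (μ : Measure Ω) {d : ℕ}
    (X : Ω → (Fin d → ℝ)) (Y : Ω → ℝ) (φ : ℝ → ℝ) (h : (Fin d → ℝ) → ℝ) : ℝ :=
  ∫ ω, (φ (Y ω) - φ (h (X ω)) - (Y ω - h (X ω)) * deriv φ (h (X ω))) ∂μ

/-- The approximated risk `R_linear(h; λ, w₁, w₂)`. -/
noncomputable def linRisk {Ω : Type*} [MeasurableSpace Ω] (μ : Measure Ω) {d : ℕ}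
    (X X' : Ω → (Fin d → ℝ)) (Y Y' : Ω → ℝ) (φ : ℝ → ℝ)
    (lam w1 w2 : ℝ) (h : (Fin d → ℝ) → ℝ) : ℝ :=
  (∫ ω, φ (Y ω) ∂μ)
    - (∫ ω, (φ (h (X ω)) - (h (X ω) - lam) * deriv φ (h (X ω))) ∂μ)
    - (w1 - lam / 2) * (∫ ω, deriv φ (h (if Y' ω ≤ Y ω then X ω else X' ω)) ∂μ)
    - (w2 - lam / 2) * ∫ ω, deriv φ (h (if Y' ω ≤ Y ω then X' ω else X ω)) ∂μ

/-- `Err(w₁, w₂) = E[|Y - 2w₁ F_Y(Y) - 2w₂ (1 - F_Y(Y))|]`. -/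
noncomputable def errW {Ω : Type*} [MeasurableSpace Ω] (μ : Measure Ω)
    (Y : Ω → ℝ) (w1 w2 : ℝ) : ℝ :=
  ∫ ω, |Y ω - 2 * w1 * (μ {ω' | Y ω' ≤ Y ω}).toReal
      - 2 * w2 * (1 - (μ {ω' | Y ω' ≤ Y ω}).toReal)| ∂μ

/-!
Since ties `Y = Y'` have probability zero, independence and exchangeability of the two
copies give, for measurable `g` with `g(X)` integrable,
`E[g(X⁺)] = 2 E[g(X) F_Y(Y)]` and `E[g(X⁻)] = 2 E[g(X) (1 - F_Y(Y))]`
(the first copy wins the comparison with conditional probability `F_Y(Y)`).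
With `g = φ' ∘ h` this turns `R_linear(h)` into
`R(h) + E[(Y - 2w₁F_Y(Y) - 2w₂(1 - F_Y(Y))) φ'(h(X))]`, so `|R - R_linear| ≤ M Err(w₁, w₂)`
on `H`. The usual comparison of an empirical minimizer with any `h* ∈ H` then costs `2ε` for
the estimate `R̂` and `2M Err(w₁, w₂)` for the linearization.
-/

section Comparison

variable {β : Type*} [MeasurableSpace β]

theorem integral_indicator_comp_fst_prod {μ ν : Measure β} [SFinite μ] [IsFiniteMeasure ν]
    {S : Set (β × β)} (hS : MeasurableSet S) {g : β → ℝ} (hg : Integrable g μ) :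
    ∫ z, S.indicator (fun z => g z.1) z ∂(μ.prod ν)
      = ∫ p, g p * ν.real (Prod.mk p ⁻¹' S) ∂μ := by
  rw [integral_prod _ ((hg.comp_fst ν).indicator hS)]
  refine integral_congr_ae (Filter.Eventually.of_forall fun p => ?_)
  change ∫ q, (Prod.mk p ⁻¹' S).indicator (fun _ => g p) q ∂ν = _
  rw [integral_indicator_const _ (measurable_prodMk_left hS), smul_eq_mul, mul_comm]

theorem integral_prod_ite {ν : Measure β} [IsFiniteMeasure ν] {r : β → β → Prop}
    [DecidableRel r] (hr : MeasurableSet {z : β × β | r z.2 z.1}) {g : β → ℝ}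
    (hg : Integrable g ν) :
    ∫ z, (if r z.2 z.1 then g z.1 else g z.2) ∂(ν.prod ν)
      = (∫ p, g p * ν.real {q | r q p} ∂ν) + ∫ p, g p * ν.real {q | ¬ r p q} ∂ν := by
  set S : Set (β × β) := {z | r z.2 z.1}
  have hsplit : (fun z : β × β => if r z.2 z.1 then g z.1 else g z.2)
      = fun z => S.indicator (fun z => g z.1) z + Sᶜ.indicator (fun z => g z.2) z := by
    ext z
    by_cases hz : r z.2 z.1 <;> simp [S, hz]
  have hswap : ∫ z, Sᶜ.indicator (fun z => g z.2) z ∂(ν.prod ν)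
      = ∫ z, (Prod.swap ⁻¹' Sᶜ).indicator (fun z => g z.1) z ∂(ν.prod ν) := by
    rw [← integral_prod_swap]
    rfl
  have hS' : MeasurableSet (Prod.swap ⁻¹' Sᶜ) := hr.compl.preimage measurable_swap
  rw [hsplit, integral_add ((hg.comp_fst ν).indicator hr) ((hg.comp_snd ν).indicator hr.compl),
    hswap, integral_indicator_comp_fst_prod hr hg, integral_indicator_comp_fst_prod hS' hg]
  rfl

theorem measureReal_lt_eq_measureReal_le {ν : Measure β} {s : β → ℝ} {t : ℝ}
    (hatom : ν {q | s q = t} = 0) : ν.real {q | s q < t} = ν.real {q | s q ≤ t} := by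
  rw [measureReal_def, measureReal_def, ← measure_sdiff_null (s := {q | s q ≤ t}) hatom]
  congr 2
  ext q
  exact lt_iff_le_and_ne (a := s q)

theorem monotone_measureReal_setOf_le {ν : Measure β} [IsFiniteMeasure ν] (s : β → ℝ) :
    Monotone fun t => ν.real {q | s q ≤ t} :=
  fun _ _ hab => measureReal_mono fun _ hq => le_trans hq hab

variable {ν : Measure β} {s : β → ℝ} {g : β → ℝ}

theorem integral_prod_ite_le_s8 [IsFiniteMeasure ν] (hs : Measurable s)
    (hatom : ∀ t, ν {q | s q = t} = 0) (hg : Integrable g ν) :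
    ∫ z, (if s z.2 ≤ s z.1 then g z.1 else g z.2) ∂(ν.prod ν)
      = 2 * ∫ p, g p * ν.real {q | s q ≤ s p} ∂ν := by
  rw [integral_prod_ite (r := fun q p => s q ≤ s p)
    (measurableSet_le (hs.comp measurable_snd) (hs.comp measurable_fst)) hg, two_mul]
  congr 1
  refine integral_congr_ae (Filter.Eventually.of_forall fun p => ?_)
  simp only [not_le]
  rw [measureReal_lt_eq_measureReal_le (hatom (s p))]

theorem integral_prod_ite_le_swap [IsProbabilityMeasure ν] (hs : Measurable s)
    (hatom : ∀ t, ν {q | s q = t} = 0) (hg : Integrable g ν) :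
    ∫ z, (if s z.2 ≤ s z.1 then g z.2 else g z.1) ∂(ν.prod ν)
      = 2 * ∫ p, g p * (1 - ν.real {q | s q ≤ s p}) ∂ν := by
  have hflip : ∀ z : β × β, (if s z.2 ≤ s z.1 then g z.2 else g z.1)
      = if s z.1 < s z.2 then g z.1 else g z.2 := fun z => by
    split_ifs <;> first | rfl | linarith
  simp_rw [hflip]
  rw [integral_prod_ite (r := fun q p => s p < s q)
    (measurableSet_lt (hs.comp measurable_fst) (hs.comp measurable_snd)) hg, two_mul]
  congr 1 <;> refine integral_congr_ae (Filter.Eventually.of_forall fun p => congrArg (g p * ·) ?_)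
  · rw [← probReal_compl_eq_one_sub (measurableSet_le hs measurable_const)]
    congr 1
    ext q
    exact not_le (α := ℝ) |>.symm
  · rw [← measureReal_lt_eq_measureReal_le (hatom (s p)),
      ← probReal_compl_eq_one_sub (measurableSet_lt hs measurable_const)]
    rfl

end Comparison

section PairComparison

variable {Ω β : Type*} [MeasurableSpace Ω] [MeasurableSpace β] {μ : Measure Ω}
  [IsProbabilityMeasure μ] {Z Z' : Ω → β}

theorem integral_comp_prod_of_indepFun (hZ : AEMeasurable Z μ) (hZ' : AEMeasurable Z' μ)
    (hind : IndepFun Z Z' μ) (hident : μ.map Z = μ.map Z') {G : β × β → ℝ}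
    (hG : AEStronglyMeasurable G ((μ.map Z).prod (μ.map Z))) :
    ∫ ω, G (Z ω, Z' ω) ∂μ = ∫ z, G z ∂((μ.map Z).prod (μ.map Z)) := by
  have hmap : μ.map (fun ω => (Z ω, Z' ω)) = (μ.map Z).prod (μ.map Z) := by
    rw [hind.map_prod_eq_prod_map_map hZ hZ', ← hident]
  rw [← hmap, integral_map (hZ.prodMk hZ') (hmap ▸ hG)]

variable {s : β → ℝ} {g : β → ℝ}

theorem integral_map_mul_measureReal_le (hZ : AEMeasurable Z μ) (hs : Measurable s)
    (hg : Measurable g) {f : ℝ → ℝ} (hf : Measurable f) :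
    ∫ p, g p * f ((μ.map Z).real {q | s q ≤ s p}) ∂(μ.map Z)
      = ∫ ω, g (Z ω) * f (μ.real {ω' | s (Z ω') ≤ s (Z ω)}) ∂μ := by
  have hF : Measurable fun p => (μ.map Z).real {q | s q ≤ s p} :=
    (monotone_measureReal_setOf_le s).measurable.comp hs
  rw [integral_map hZ (show Measurable fun p => g p * f ((μ.map Z).real {q | s q ≤ s p}) from
    hg.mul (hf.comp hF)).aestronglyMeasurable]
  simp_rw [map_measureReal_apply_of_aemeasurable hZ (measurableSet_le hs measurable_const)]
  rfl

theorem integral_ite_le_of_indepFun (hZ : AEMeasurable Z μ) (hZ' : AEMeasurable Z' μ)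
    (hind : IndepFun Z Z' μ) (hident : μ.map Z = μ.map Z') (hs : Measurable s)
    (hatom : ∀ t, μ {ω | s (Z ω) = t} = 0) (hg : Measurable g)
    (hgi : Integrable (fun ω => g (Z ω)) μ) :
    ∫ ω, g (if s (Z' ω) ≤ s (Z ω) then Z ω else Z' ω) ∂μ
      = 2 * ∫ ω, g (Z ω) * μ.real {ω' | s (Z ω') ≤ s (Z ω)} ∂μ := by
  have := Measure.isProbabilityMeasure_map hZ
  have hνatom : ∀ t, μ.map Z {q | s q = t} = 0 := fun t => by
    rw [Measure.map_apply_of_aemeasurable hZ (measurableSet_eq_fun hs measurable_const)]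
    exact hatom t
  have hgν : Integrable g (μ.map Z) :=
    (integrable_map_measure hg.aestronglyMeasurable hZ).mpr hgi
  have hG : Measurable fun z : β × β => if s z.2 ≤ s z.1 then g z.1 else g z.2 :=
    Measurable.ite (measurableSet_le (hs.comp measurable_snd) (hs.comp measurable_fst))
      (hg.comp measurable_fst) (hg.comp measurable_snd)
  calc ∫ ω, g (if s (Z' ω) ≤ s (Z ω) then Z ω else Z' ω) ∂μ
      = ∫ ω, (fun z : β × β => if s z.2 ≤ s z.1 then g z.1 else g z.2) (Z ω, Z' ω) ∂μ := by
        simp only [apply_ite g]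
    _ = 2 * ∫ p, g p * (μ.map Z).real {q | s q ≤ s p} ∂(μ.map Z) := by
        rw [integral_comp_prod_of_indepFun hZ hZ' hind hident hG.aestronglyMeasurable,
          integral_prod_ite_le_s8 hs hνatom hgν]
    _ = _ := congrArg (2 * ·) (integral_map_mul_measureReal_le hZ hs hg measurable_id)

theorem integral_ite_le_swap_of_indepFun (hZ : AEMeasurable Z μ) (hZ' : AEMeasurable Z' μ)
    (hind : IndepFun Z Z' μ) (hident : μ.map Z = μ.map Z') (hs : Measurable s)
    (hatom : ∀ t, μ {ω | s (Z ω) = t} = 0) (hg : Measurable g)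
    (hgi : Integrable (fun ω => g (Z ω)) μ) :
    ∫ ω, g (if s (Z' ω) ≤ s (Z ω) then Z' ω else Z ω) ∂μ
      = 2 * ∫ ω, g (Z ω) * (1 - μ.real {ω' | s (Z ω') ≤ s (Z ω)}) ∂μ := by
  have := Measure.isProbabilityMeasure_map hZ
  have hνatom : ∀ t, μ.map Z {q | s q = t} = 0 := fun t => by
    rw [Measure.map_apply_of_aemeasurable hZ (measurableSet_eq_fun hs measurable_const)]
    exact hatom t
  have hgν : Integrable g (μ.map Z) :=
    (integrable_map_measure hg.aestronglyMeasurable hZ).mpr hgi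
  have hG : Measurable fun z : β × β => if s z.2 ≤ s z.1 then g z.2 else g z.1 :=
    Measurable.ite (measurableSet_le (hs.comp measurable_snd) (hs.comp measurable_fst))
      (hg.comp measurable_snd) (hg.comp measurable_fst)
  calc ∫ ω, g (if s (Z' ω) ≤ s (Z ω) then Z' ω else Z ω) ∂μ
      = ∫ ω, (fun z : β × β => if s z.2 ≤ s z.1 then g z.2 else g z.1) (Z ω, Z' ω) ∂μ := by
        simp only [apply_ite g]
    _ = 2 * ∫ p, g p * (1 - (μ.map Z).real {q | s q ≤ s p}) ∂(μ.map Z) := by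
        rw [integral_comp_prod_of_indepFun hZ hZ' hind hident hG.aestronglyMeasurable,
          integral_prod_ite_le_swap hs hνatom hgν]
    _ = _ := congrArg (2 * ·)
        (integral_map_mul_measureReal_le hZ hs hg (measurable_const.sub measurable_id))

end PairComparison

section Risk

variable {Ω : Type*} [MeasurableSpace Ω] {μ : Measure Ω}

theorem abs_integral_mul_le_of_abs_le {f b : Ω → ℝ} {M : ℝ} (hf : Integrable f μ)
    (hM : ∀ ω, |b ω| ≤ M) : |∫ ω, f ω * b ω ∂μ| ≤ M * ∫ ω, |f ω| ∂μ :=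
  calc |∫ ω, f ω * b ω ∂μ| ≤ ∫ ω, |f ω * b ω| ∂μ := abs_integral_le_integral_abs
    _ ≤ ∫ ω, |f ω| * M ∂μ := by
      refine integral_mono_of_nonneg (ae_of_all _ fun ω => abs_nonneg _) (hf.abs.mul_const M)
        (ae_of_all _ fun ω => ?_)
      exact (abs_mul _ _).trans_le (mul_le_mul_of_nonneg_left (hM ω) (abs_nonneg _))
    _ = M * ∫ ω, |f ω| ∂μ := by rw [integral_mul_const, mul_comm]

variable [IsProbabilityMeasure μ] {d : ℕ} {X X' : Ω → (Fin d → ℝ)} {Y Y' : Ω → ℝ}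

theorem integrable_measureReal_setOf_le (hY : Measurable Y) :
    Integrable (fun ω => μ.real {ω' | Y ω' ≤ Y ω}) μ :=
  .of_bound ((monotone_measureReal_setOf_le Y).measurable.comp hY).aestronglyMeasurable 1
    (ae_of_all _ fun _ => abs_le.mpr ⟨neg_one_lt_zero.le.trans measureReal_nonneg,
      measureReal_le_one⟩)

theorem trueRisk_sub_linRisk (hX : Measurable X) (hY : Measurable Y) (hX' : Measurable X')
    (hY' : Measurable Y') (hindep : IndepFun (fun ω => (X ω, Y ω)) (fun ω => (X' ω, Y' ω)) μ)
    (hident : μ.map (fun ω => (X ω, Y ω)) = μ.map (fun ω => (X' ω, Y' ω)))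
    (hatomless : ∀ t : ℝ, μ {ω | Y ω = t} = 0) (hYint : Integrable Y μ) {φ : ℝ → ℝ}
    (hφY : Integrable (fun ω => φ (Y ω)) μ) {h : (Fin d → ℝ) → ℝ} (hmeas : Measurable h) {M : ℝ}
    (hM : ∀ x, |deriv φ (h x)| ≤ M) (hint1 : Integrable (fun ω => φ (h (X ω))) μ)
    (hint2 : Integrable (fun ω => h (X ω) * deriv φ (h (X ω))) μ) (lam w1 w2 : ℝ) :
    trueRisk μ X Y φ h - linRisk μ X X' Y Y' φ lam w1 w2 h
      = -∫ ω, (Y ω - 2 * w1 * μ.real {ω' | Y ω' ≤ Y ω}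
          - 2 * w2 * (1 - μ.real {ω' | Y ω' ≤ Y ω})) * deriv φ (h (X ω)) ∂μ := by
  have hZ : Measurable fun ω => (X ω, Y ω) := hX.prodMk hY
  have hZ' : Measurable fun ω => (X' ω, Y' ω) := hX'.prodMk hY'
  have hg : Measurable fun z : (Fin d → ℝ) × ℝ => deriv φ (h z.1) :=
    (measurable_deriv φ).comp (hmeas.comp measurable_fst)
  set F : Ω → ℝ := fun ω => μ.real {ω' | Y ω' ≤ Y ω}
  set D : Ω → ℝ := fun ω => deriv φ (h (X ω))
  have hD : Measurable D := hg.comp hZ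
  have hDM : ∀ᵐ ω ∂μ, ‖D ω‖ ≤ M := ae_of_all _ fun ω => hM (X ω)
  have iD : Integrable D μ := .of_bound hD.aestronglyMeasurable M hDM
  have iF : Integrable F μ := integrable_measureReal_setOf_le hY
  have iDF : Integrable (fun ω => D ω * F ω) μ := iF.bdd_mul hD.aestronglyMeasurable hDM
  have iD1F : Integrable (fun ω => D ω * (1 - F ω)) μ :=
    ((integrable_const 1).sub iF).bdd_mul hD.aestronglyMeasurable hDM
  have iYD : Integrable (fun ω => Y ω * D ω) μ := hYint.mul_bdd hD.aestronglyMeasurable hDM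
  have hplus : ∫ ω, deriv φ (h (if Y' ω ≤ Y ω then X ω else X' ω)) ∂μ
      = 2 * ∫ ω, D ω * F ω ∂μ := by
    simpa only [apply_ite Prod.fst] using integral_ite_le_of_indepFun hZ.aemeasurable
      hZ'.aemeasurable hindep hident measurable_snd hatomless hg iD
  have hminus : ∫ ω, deriv φ (h (if Y' ω ≤ Y ω then X' ω else X ω)) ∂μ
      = 2 * ∫ ω, D ω * (1 - F ω) ∂μ := by
    simpa only [apply_ite Prod.fst] using integral_ite_le_swap_of_indepFun hZ.aemeasurable
      hZ'.aemeasurable hindep hident measurable_snd hatomless hg iD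
  have iT : Integrable (fun ω => φ (Y ω) - φ (h (X ω)) - (Y ω - h (X ω)) * D ω) μ :=
    ((hφY.sub hint1).sub (iYD.sub hint2)).congr
      (ae_of_all _ fun ω => by simp only [Pi.sub_apply, D]; ring)
  have iA : Integrable (fun ω => φ (h (X ω)) - (h (X ω) - lam) * D ω) μ :=
    ((hint1.sub hint2).add (iD.const_mul lam)).congr
      (ae_of_all _ fun ω => by simp only [Pi.add_apply, Pi.sub_apply, D]; ring)
  -- the `lam`-terms cancel pointwise because `F + (1 - F) = 1`
  calc trueRisk μ X Y φ h - linRisk μ X X' Y Y' φ lam w1 w2 h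
      = ∫ ω, (φ (Y ω) - φ (h (X ω)) - (Y ω - h (X ω)) * D ω - φ (Y ω)
          + (φ (h (X ω)) - (h (X ω) - lam) * D ω)
          + (2 * w1 - lam) * (D ω * F ω) + (2 * w2 - lam) * (D ω * (1 - F ω))) ∂μ := by
        rw [integral_add, integral_add, integral_add, integral_sub iT hφY, integral_const_mul,
          integral_const_mul]
        · simp only [trueRisk, linRisk, hplus, hminus]
          ring
        exacts [iT.sub hφY, iA, (iT.sub hφY).add iA, iDF.const_mul _,
          ((iT.sub hφY).add iA).add (iDF.const_mul _), iD1F.const_mul _]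
    _ = _ := by
        rw [← integral_neg]
        congr 1
        ext ω
        ring

theorem abs_trueRisk_sub_linRisk_le (hX : Measurable X) (hY : Measurable Y)
    (hX' : Measurable X') (hY' : Measurable Y')
    (hindep : IndepFun (fun ω => (X ω, Y ω)) (fun ω => (X' ω, Y' ω)) μ)
    (hident : μ.map (fun ω => (X ω, Y ω)) = μ.map (fun ω => (X' ω, Y' ω)))
    (hatomless : ∀ t : ℝ, μ {ω | Y ω = t} = 0) (hYint : Integrable Y μ) {φ : ℝ → ℝ}
    (hφY : Integrable (fun ω => φ (Y ω)) μ) {h : (Fin d → ℝ) → ℝ} (hmeas : Measurable h) {M : ℝ}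
    (hM : ∀ x, |deriv φ (h x)| ≤ M) (hint1 : Integrable (fun ω => φ (h (X ω))) μ)
    (hint2 : Integrable (fun ω => h (X ω) * deriv φ (h (X ω))) μ) (lam w1 w2 : ℝ) :
    |trueRisk μ X Y φ h - linRisk μ X X' Y Y' φ lam w1 w2 h| ≤ M * errW μ Y w1 w2 := by
  have iF := integrable_measureReal_setOf_le (μ := μ) hY
  rw [trueRisk_sub_linRisk hX hY hX' hY' hindep hident hatomless hYint hφY hmeas hM hint1 hint2,
    abs_neg]
  exact abs_integral_mul_le_of_abs_le
    ((hYint.sub (iF.const_mul _)).sub (((integrable_const 1).sub iF).const_mul _))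
    (fun ω => hM (X ω))

end Risk

theorem stmt_8_general
    {Ω : Type*} [MeasurableSpace Ω] {μ : Measure Ω} [IsProbabilityMeasure μ]
    {d : ℕ} {X X' : Ω → (Fin d → ℝ)} {Y Y' : Ω → ℝ}
    (hX : Measurable X) (hY : Measurable Y) (hX' : Measurable X') (hY' : Measurable Y')
    (hindep : IndepFun (fun ω => (X ω, Y ω)) (fun ω => (X' ω, Y' ω)) μ)
    (hident : μ.map (fun ω => (X ω, Y ω)) = μ.map (fun ω => (X' ω, Y' ω)))
    (hatomless : ∀ t : ℝ, μ {ω | Y ω = t} = 0)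
    (hYint : Integrable Y μ)
    (φ : ℝ → ℝ)
    (hφY : Integrable (fun ω => φ (Y ω)) μ)
    (H : Set ((Fin d → ℝ) → ℝ)) (M : ℝ)
    (hHmeas : ∀ h ∈ H, Measurable h)
    (hHM : ∀ h ∈ H, ∀ x, |deriv φ (h x)| ≤ M)
    (hHint1 : ∀ h ∈ H, Integrable (fun ω => φ (h (X ω))) μ)
    (hHint2 : ∀ h ∈ H, Integrable (fun ω => h (X ω) * deriv φ (h (X ω))) μ)
    (lam w1 w2 ε : ℝ)
    (Rhat : ((Fin d → ℝ) → ℝ) → ℝ)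
    (hsup : ∀ h ∈ H, |linRisk μ X X' Y Y' φ lam w1 w2 h - Rhat h| ≤ ε)
    (hhat hstar : (Fin d → ℝ) → ℝ)
    (hhatH : hhat ∈ H) (hhatmin : ∀ h ∈ H, Rhat hhat ≤ Rhat h)
    (hstarH : hstar ∈ H) :
    trueRisk μ X Y φ hhat
      ≤ trueRisk μ X Y φ hstar + 2 * ε + 2 * M * errW μ Y w1 w2 := by
  have hclose : ∀ h ∈ H,
      |trueRisk μ X Y φ h - linRisk μ X X' Y Y' φ lam w1 w2 h| ≤ M * errW μ Y w1 w2 :=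
    fun h hh => abs_trueRisk_sub_linRisk_le hX hY hX' hY' hindep hident hatomless hYint hφY
      (hHmeas h hh) (hHM h hh) (hHint1 h hh) (hHint2 h hh) lam w1 w2
  calc trueRisk μ X Y φ hhat
      ≤ linRisk μ X X' Y Y' φ lam w1 w2 hhat + M * errW μ Y w1 w2 := by
        linarith [(abs_le.mp (hclose hhat hhatH)).2]
    _ ≤ Rhat hhat + ε + M * errW μ Y w1 w2 := by linarith [(abs_le.mp (hsup hhat hhatH)).2]
    _ ≤ Rhat hstar + ε + M * errW μ Y w1 w2 := by linarith [hhatmin hstar hstarH]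
    _ ≤ linRisk μ X X' Y Y' φ lam w1 w2 hstar + 2 * ε + M * errW μ Y w1 w2 := by
        linarith [(abs_le.mp (hsup hstar hstarH)).1]
    _ ≤ trueRisk μ X Y φ hstar + 2 * ε + 2 * M * errW μ Y w1 w2 := by
        linarith [(abs_le.mp (hclose hstar hstarH)).1]

/-- If `R̂` approximates `R_linear` uniformly on `H` up to `ε`, `ĥ` is an
empirical risk minimizer of `R̂` over `H`, and `h*` minimizes the true risk `R` over `H`,
then `R(ĥ) ≤ R(h*) + 2ε + 2M·Err(w₁, w₂)`. -/
theorem stmt_8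
    {Ω : Type*} [MeasurableSpace Ω] {μ : Measure Ω} [IsProbabilityMeasure μ]
    {d : ℕ} {X X' : Ω → (Fin d → ℝ)} {Y Y' : Ω → ℝ}
    (hX : Measurable X) (hY : Measurable Y) (hX' : Measurable X') (hY' : Measurable Y')
    (hindep : IndepFun (fun ω => (X ω, Y ω)) (fun ω => (X' ω, Y' ω)) μ)
    (hident : μ.map (fun ω => (X ω, Y ω)) = μ.map (fun ω => (X' ω, Y' ω)))
    (hatomless : ∀ t : ℝ, μ {ω | Y ω = t} = 0)
    (hYint : Integrable Y μ)
    (φ : ℝ → ℝ) (hφdiff : Differentiable ℝ φ) (hφconv : ConvexOn ℝ Set.univ φ)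
    (hφY : Integrable (fun ω => φ (Y ω)) μ)
    (H : Set ((Fin d → ℝ) → ℝ)) (M : ℝ)
    (hHmeas : ∀ h ∈ H, Measurable h)
    (hHM : ∀ h ∈ H, ∀ x, |deriv φ (h x)| ≤ M)
    (hHint1 : ∀ h ∈ H, Integrable (fun ω => φ (h (X ω))) μ)
    (hHint2 : ∀ h ∈ H, Integrable (fun ω => h (X ω) * deriv φ (h (X ω))) μ)
    (lam w1 w2 ε : ℝ)
    (Rhat : ((Fin d → ℝ) → ℝ) → ℝ)
    (hsup : ∀ h ∈ H, |linRisk μ X X' Y Y' φ lam w1 w2 h - Rhat h| ≤ ε)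
    (hhat hstar : (Fin d → ℝ) → ℝ)
    (hhatH : hhat ∈ H) (hhatmin : ∀ h ∈ H, Rhat hhat ≤ Rhat h)
    (hstarH : hstar ∈ H)
    (hstarmin : ∀ h ∈ H, trueRisk μ X Y φ hstar ≤ trueRisk μ X Y φ h) :
    trueRisk μ X Y φ hhat
      ≤ trueRisk μ X Y φ hstar + 2 * ε + 2 * M * errW μ Y w1 w2 :=
  stmt_8_general hX hY hX' hY' hindep hident hatomless hYint φ hφY H M hHmeas hHM hHint1 hHint2 lam
    w1 w2 ε Rhat hsup hhat hstar hhatH hhatmin hstarH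
end

section
/- There exist two probability measures P and P̃ on ℝ × ℝ (with coordinates denoted (X, Y)) such that: (i) the first-coordinate marginals of P and P̃ are equal; (ii) the second-coordinate marginals of P and P̃ are equal; (iii) if from each measure one draws two independent pairs (X, Y), (X', Y') and forms the pairwise comparison variables X⁺ = X if Y ≥ Y' and X⁺ = X' otherwise, X⁻ = X' if Y ≥ Y' and X⁻ = X otherwise, then the resulting laws of (X⁺, X⁻) under P and P̃ are equal; yet (iv) the conditional expectations x ↦ E_P[Y | X = x] and x ↦ E_{P̃}[Y | X = x] differ on a set of positive marginal measure. (Explicit witnesses: P has density f(x,y) = 1/6 on [−1,1] × ([0,2] ∪ [3,4]) and 0 elsewhere; P̃ has density 1/8 on [−1,0)×[0,1), 1/4 on [−1,0)×[1,2), 1/8 on [−1,0)×[3,4], 5/24 on [0,1]×[0,1), 1/12 on [0,1]×[1,2), 5/24 on [0,1]×[3,4], and 0 elsewhere.) -/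
open MeasureTheory ProbabilityTheory
open scoped ENNReal

/-- Auxiliary measure: `(1/9) • Qm9` is a probability measure on `ℝ × ℝ` with independent
coordinates, first marginal `(2/3)δ₀ + (1/3)δ₁`, second marginal uniform on `{0,1,3}`. -/
noncomputable def Qm9 : Measure (ℝ × ℝ) :=
  .dirac (0,0) + .dirac (0,1) + .dirac (0,3) + .dirac (0,0) + .dirac (0,1) + .dirac (0,3)
  + .dirac (1,0) + .dirac (1,1) + .dirac (1,3)

/-- Auxiliary measure: `(1/9) • Rm9` has the same marginals but dependent coordinates. -/
noncomputable def Rm9 : Measure (ℝ × ℝ) :=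
  .dirac (0,0) + .dirac (0,3) + .dirac (1,1) + .dirac (0,0) + .dirac (0,3) + .dirac (1,1)
  + .dirac (0,0) + .dirac (0,3) + .dirac (1,1)

instance : IsFiniteMeasure Qm9 := by unfold Qm9; infer_instance
instance : IsFiniteMeasure Rm9 := by unfold Rm9; infer_instance

lemma smul_prod_meas9 {α β : Type*} [MeasurableSpace α] [MeasurableSpace β]
    (c : ℝ≥0∞) (μ : Measure α) (ν : Measure β) [SFinite ν] :
    (c • μ).prod ν = c • μ.prod ν := by
  ext s hs
  rw [Measure.smul_apply, Measure.prod_apply hs, Measure.prod_apply hs,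
    lintegral_smul_measure, smul_eq_mul]

lemma prod_smul_meas9 {α β : Type*} [MeasurableSpace α] [MeasurableSpace β]
    (c : ℝ≥0∞) (hc : c ≠ ⊤) (μ : Measure α) (ν : Measure β) [IsFiniteMeasure ν] :
    μ.prod (c • ν) = c • μ.prod ν := by
  haveI := ν.smul_finite hc
  ext s hs
  rw [Measure.smul_apply, Measure.prod_apply hs, Measure.prod_apply hs]
  simp_rw [Measure.smul_apply, smul_eq_mul]
  rw [lintegral_const_mul' _ _ hc]

lemma integrable_dirac9 (g : ℝ × ℝ → ℝ) (a : ℝ × ℝ) :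
    Integrable g (Measure.dirac a) :=
  (integrable_const (g a)).congr (ae_eq_dirac g).symm

lemma int6_dirac9 (g : ℝ × ℝ → ℝ) (a b c d e f' : ℝ × ℝ) :
    ∫ p, g p ∂(Measure.dirac a + Measure.dirac b + Measure.dirac c + Measure.dirac d
      + Measure.dirac e + Measure.dirac f')
    = g a + g b + g c + g d + g e + g f' := by
  have I := integrable_dirac9 g
  have I2 := (I a).add_measure (I b)
  have I3 := I2.add_measure (I c)
  have I4 := I3.add_measure (I d)
  have I5 := I4.add_measure (I e)
  rw [integral_add_measure I5 (I f'), integral_add_measure I4 (I e),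
    integral_add_measure I3 (I d), integral_add_measure I2 (I c),
    integral_add_measure (I a) (I b), integral_dirac, integral_dirac, integral_dirac,
    integral_dirac, integral_dirac, integral_dirac]

/-- There exist two probability measures on `ℝ × ℝ` with the same first-
and second-coordinate marginals and the same law of the pairwise comparison pair
`(X⁺, X⁻)` built from two independent draws, whose conditional expectations
`x ↦ E[Y | X = x]` nevertheless differ on a set of positive marginal measure (i.e. no
single function of the first coordinate is a version of both conditional expectations). -/
theorem stmt_9 :
    ∃ P Pt : Measure (ℝ × ℝ),
      IsProbabilityMeasure P ∧ IsProbabilityMeasure Pt ∧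
      P.map Prod.fst = Pt.map Prod.fst ∧
      P.map Prod.snd = Pt.map Prod.snd ∧
      (P.prod P).map (fun q : (ℝ × ℝ) × (ℝ × ℝ) =>
          if q.2.2 ≤ q.1.2 then (q.1.1, q.2.1) else (q.2.1, q.1.1))
        = (Pt.prod Pt).map (fun q : (ℝ × ℝ) × (ℝ × ℝ) =>
          if q.2.2 ≤ q.1.2 then (q.1.1, q.2.1) else (q.2.1, q.1.1)) ∧
      ∀ c ct : ℝ → ℝ,
        (P[(fun p : ℝ × ℝ => p.2) | MeasurableSpace.comap Prod.fst inferInstance]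
            =ᵐ[P] fun p => c p.1) →
        (Pt[(fun p : ℝ × ℝ => p.2) | MeasurableSpace.comap Prod.fst inferInstance]
            =ᵐ[Pt] fun p => ct p.1) →
        ¬ (c =ᵐ[P.map Prod.fst] ct) := by
  classical
  refine ⟨(9:ℝ≥0∞)⁻¹ • Qm9, (9:ℝ≥0∞)⁻¹ • Rm9, ?_, ?_, ?_, ?_, ?_, ?_⟩
  · constructor
    simp [Qm9, Measure.add_apply]
    rw [show (9⁻¹+9⁻¹+9⁻¹+9⁻¹+9⁻¹+9⁻¹+9⁻¹+9⁻¹+9⁻¹ : ℝ≥0∞) = 9 * 9⁻¹ by ring]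
    exact ENNReal.mul_inv_cancel (by norm_num) (by norm_num)
  · constructor
    simp [Rm9, Measure.add_apply]
    rw [show (9⁻¹+9⁻¹+9⁻¹+9⁻¹+9⁻¹+9⁻¹+9⁻¹+9⁻¹+9⁻¹ : ℝ≥0∞) = 9 * 9⁻¹ by ring]
    exact ENNReal.mul_inv_cancel (by norm_num) (by norm_num)
  · rw [Measure.map_smul, Measure.map_smul]
    congr 1
    have hmadd : ∀ μ ν : Measure (ℝ × ℝ), (μ + ν).map (Prod.fst : ℝ × ℝ → ℝ)
        = μ.map Prod.fst + ν.map Prod.fst := fun μ ν => Measure.map_add μ ν measurable_fst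
    have hmd : ∀ a : ℝ × ℝ, (Measure.dirac a).map (Prod.fst : ℝ × ℝ → ℝ)
        = Measure.dirac a.1 := fun a => Measure.map_dirac' measurable_fst a
    simp only [Qm9, Rm9, hmadd, hmd]
    ext s hs
    simp only [Measure.add_apply, Measure.dirac_apply]
    ring
  · rw [Measure.map_smul, Measure.map_smul]
    congr 1
    have hmadd : ∀ μ ν : Measure (ℝ × ℝ), (μ + ν).map (Prod.snd : ℝ × ℝ → ℝ)
        = μ.map Prod.snd + ν.map Prod.snd := fun μ ν => Measure.map_add μ ν measurable_snd
    have hmd : ∀ a : ℝ × ℝ, (Measure.dirac a).map (Prod.snd : ℝ × ℝ → ℝ)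
        = Measure.dirac a.2 := fun a => Measure.map_dirac' measurable_snd a
    simp only [Qm9, Rm9, hmadd, hmd]
    ext s hs
    simp only [Measure.add_apply, Measure.dirac_apply]
    ring
  · set f : (ℝ × ℝ) × (ℝ × ℝ) → ℝ × ℝ :=
      (fun q => if q.2.2 ≤ q.1.2 then (q.1.1, q.2.1) else (q.2.1, q.1.1)) with hfdef
    have hf : Measurable f := by
      apply Measurable.ite (measurableSet_le (measurable_snd.comp measurable_snd)
        (measurable_snd.comp measurable_fst))
      · exact (measurable_fst.comp measurable_fst).prodMk (measurable_fst.comp measurable_snd)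
      · exact (measurable_fst.comp measurable_snd).prodMk (measurable_fst.comp measurable_fst)
    have h1 : ((9:ℝ≥0∞)⁻¹ • Qm9).prod ((9:ℝ≥0∞)⁻¹ • Qm9)
        = ((9:ℝ≥0∞)⁻¹ * (9:ℝ≥0∞)⁻¹) • (Qm9.prod Qm9) := by
      rw [prod_smul_meas9 _ (by norm_num) _ _, smul_prod_meas9, smul_smul]
    have h2 : ((9:ℝ≥0∞)⁻¹ • Rm9).prod ((9:ℝ≥0∞)⁻¹ • Rm9)
        = ((9:ℝ≥0∞)⁻¹ * (9:ℝ≥0∞)⁻¹) • (Rm9.prod Rm9) := by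
      rw [prod_smul_meas9 _ (by norm_num) _ _, smul_prod_meas9, smul_smul]
    rw [h1, h2, Measure.map_smul, Measure.map_smul]
    congr 1
    have hmadd : ∀ μ ν : Measure ((ℝ × ℝ) × (ℝ × ℝ)), (μ + ν).map f = μ.map f + ν.map f :=
      fun μ ν => Measure.map_add μ ν hf
    have hmd : ∀ a : (ℝ × ℝ) × (ℝ × ℝ), (Measure.dirac a).map f = Measure.dirac (f a) :=
      fun a => Measure.map_dirac' hf a
    simp only [Qm9, Rm9, Measure.prod_add, Measure.add_prod, Measure.dirac_prod_dirac,
      hmadd, hmd]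
    norm_num [hfdef]
    ext s hs
    simp only [Measure.add_apply, Measure.dirac_apply]
    ring
  · intro c ct hc hct hae
    set P : Measure (ℝ × ℝ) := (9:ℝ≥0∞)⁻¹ • Qm9 with hPdef
    set Pt : Measure (ℝ × ℝ) := (9:ℝ≥0∞)⁻¹ • Rm9 with hPtdef
    haveI : IsFiniteMeasure P := Qm9.smul_finite (by norm_num)
    haveI : IsFiniteMeasure Pt := Rm9.smul_finite (by norm_num)
    have hm : MeasurableSpace.comap (Prod.fst : ℝ × ℝ → ℝ) inferInstance ≤
        (inferInstance : MeasurableSpace (ℝ × ℝ)) := measurable_fst.comap_le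
    set s₀ : Set (ℝ × ℝ) := Prod.fst ⁻¹' ({0} : Set ℝ) with hs₀def
    have hs₀m : MeasurableSet[MeasurableSpace.comap (Prod.fst : ℝ × ℝ → ℝ) inferInstance] s₀ :=
      ⟨{0}, measurableSet_singleton 0, rfl⟩
    have hs₀ : MeasurableSet s₀ := measurable_fst (measurableSet_singleton 0)
    have I := integrable_dirac9 (fun p : ℝ × ℝ => p.2)
    have hIQ : Integrable (fun p : ℝ × ℝ => p.2) Qm9 := by
      rw [show Qm9 = Measure.dirac (0,0) + Measure.dirac (0,1) + Measure.dirac (0,3)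
        + Measure.dirac (0,0) + Measure.dirac (0,1) + Measure.dirac (0,3)
        + Measure.dirac (1,0) + Measure.dirac (1,1) + Measure.dirac (1,3) from rfl]
      exact ((((((((I _).add_measure (I _)).add_measure (I _)).add_measure (I _)).add_measure
        (I _)).add_measure (I _)).add_measure (I _)).add_measure (I _)).add_measure (I _)
    have hIR : Integrable (fun p : ℝ × ℝ => p.2) Rm9 := by
      rw [show Rm9 = Measure.dirac (0,0) + Measure.dirac (0,3) + Measure.dirac (1,1)
        + Measure.dirac (0,0) + Measure.dirac (0,3) + Measure.dirac (1,1)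
        + Measure.dirac (0,0) + Measure.dirac (0,3) + Measure.dirac (1,1) from rfl]
      exact ((((((((I _).add_measure (I _)).add_measure (I _)).add_measure (I _)).add_measure
        (I _)).add_measure (I _)).add_measure (I _)).add_measure (I _)).add_measure (I _)
    have hIP : Integrable (fun p : ℝ × ℝ => p.2) P := hIQ.smul_measure (by norm_num)
    have hIPt : Integrable (fun p : ℝ × ℝ => p.2) Pt := hIR.smul_measure (by norm_num)
    have hQr : Qm9.restrict s₀ = Measure.dirac ((0:ℝ),(0:ℝ)) + Measure.dirac (0,1)
        + Measure.dirac (0,3) + Measure.dirac (0,0) + Measure.dirac (0,1)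
        + Measure.dirac (0,3) := by
      simp only [Qm9, Measure.restrict_add, MeasureTheory.restrict_dirac' hs₀]
      norm_num [hs₀def]
    have hRr : Rm9.restrict s₀ = Measure.dirac ((0:ℝ),(0:ℝ)) + Measure.dirac (0,3)
        + Measure.dirac (0,0) + Measure.dirac (0,3) + Measure.dirac (0,0)
        + Measure.dirac (0,3) := by
      simp only [Rm9, Measure.restrict_add, MeasureTheory.restrict_dirac' hs₀]
      norm_num [hs₀def]
    have e1 : ∫ p in s₀, c p.1 ∂P = ∫ p in s₀, p.2 ∂P := by
      calc ∫ p in s₀, c p.1 ∂P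
          = ∫ p in s₀, (P[(fun p : ℝ × ℝ => p.2) |
              MeasurableSpace.comap Prod.fst inferInstance]) p ∂P :=
            integral_congr_ae (ae_restrict_of_ae hc.symm)
        _ = ∫ p in s₀, p.2 ∂P := setIntegral_condExp hm hIP hs₀m
    have e2 : ∫ p in s₀, ct p.1 ∂Pt = ∫ p in s₀, p.2 ∂Pt := by
      calc ∫ p in s₀, ct p.1 ∂Pt
          = ∫ p in s₀, (Pt[(fun p : ℝ × ℝ => p.2) |
              MeasurableSpace.comap Prod.fst inferInstance]) p ∂Pt :=
            integral_congr_ae (ae_restrict_of_ae hct.symm)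
        _ = ∫ p in s₀, p.2 ∂Pt := setIntegral_condExp hm hIPt hs₀m
    rw [hPdef, Measure.restrict_smul, hQr, integral_smul_measure, integral_smul_measure,
      int6_dirac9, int6_dirac9] at e1
    rw [hPtdef, Measure.restrict_smul, hRr, integral_smul_measure, integral_smul_measure,
      int6_dirac9, int6_dirac9] at e2
    simp only [ENNReal.toReal_inv, ENNReal.toReal_ofNat, smul_eq_mul] at e1 e2
    norm_num at e1 e2
    have hc0 : c 0 = 4/3 := by linarith
    have hct0 : ct 0 = 3/2 := by linarith
    have h0 : (P.map Prod.fst) {x | ¬ c x = ct x} = 0 := ae_iff.mp hae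
    have hmadd : ∀ μ ν : Measure (ℝ × ℝ), (μ + ν).map (Prod.fst : ℝ × ℝ → ℝ)
        = μ.map Prod.fst + ν.map Prod.fst := fun μ ν => Measure.map_add μ ν measurable_fst
    have hmd : ∀ a : ℝ × ℝ, (Measure.dirac a).map (Prod.fst : ℝ × ℝ → ℝ)
        = Measure.dirac a.1 := fun a => Measure.map_dirac' measurable_fst a
    have hQf : Qm9.map Prod.fst = Measure.dirac (0:ℝ) + Measure.dirac 0 + Measure.dirac 0
        + Measure.dirac 0 + Measure.dirac 0 + Measure.dirac 0 + Measure.dirac 1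
        + Measure.dirac 1 + Measure.dirac 1 := by
      simp only [Qm9, hmadd, hmd]
    rw [hPdef, Measure.map_smul, hQf] at h0
    have hmem : (0:ℝ) ∈ {x | ¬ c x = ct x} := by
      simp only [Set.mem_setOf_eq, hc0, hct0]
      norm_num
    simp only [Measure.smul_apply, Measure.add_apply, Measure.dirac_apply,
      Set.indicator_of_mem hmem, Pi.one_apply, smul_eq_mul] at h0
    rw [mul_eq_zero] at h0
    rcases h0 with h0 | h0
    · exact absurd h0 (by norm_num)
    · simp [add_eq_zero] at h0
end

section
/- For every λ ∈ ℝ and every measurable h : ℝ^d → ℝ (with all integrals finite), the transformed Bregman risk satisfies R_CDF(h) = E[φ(F_Y(Y))] − E[(λ − F_Y(h(X)))·φ'(F_Y(h(X))) + φ(F_Y(h(X)))] − ((1 − λ)/2)·E[φ'(F_Y(h(X⁺)))] + (λ/2)·E[φ'(F_Y(h(X⁻)))]; in particular, the empirical estimator R̂_CDF built by replacing the three expectations with sample averages over unlabeled data and pairwise comparison data is an unbiased estimator of R_CDF for every λ. -/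
/-!
Write `g = φ' ∘ F ∘ h`. The winner `X⁺` of a comparison is `X` on `{Y' ≤ Y}` and `X'` on
`{Y < Y'}`. On the product of the law of `(X, Y)` with itself, Fubini turns the first part into
`E[F(Y) g(X)]` and the second into `E[P(Y' < Y) g(X)]`, which is the same since `Y` is atomless;
hence `E[g(X⁺)] = 2 E[F(Y) g(X)]`. As `g(X⁺) + g(X⁻) = g(X) + g(X')`, also
`E[g(X⁻)] = 2 E[g(X)] - 2 E[F(Y) g(X)]`. Substituting both, the `λ`-terms cancel and what is left
is the expansion of `E[d_φ(F(Y), F(h(X)))]`.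
-/

open MeasureTheory ProbabilityTheory

lemma integral_prod_indicator_comp_fst_s14 {β γ : Type*} [MeasurableSpace β] [MeasurableSpace γ]
    {ν : Measure β} {ν' : Measure γ} [SFinite ν]
    [IsFiniteMeasure ν'] {s : Set (β × γ)} (hs : MeasurableSet s) {f : β → ℝ}
    (hf : Integrable f ν) :
    ∫ z, s.indicator (fun z => f z.1) z ∂(ν.prod ν')
      = ∫ x, ν'.real (Prod.mk x ⁻¹' s) * f x ∂ν := by
  rw [integral_prod _ ((hf.comp_fst ν').indicator hs)]
  refine integral_congr_ae (ae_of_all _ fun x => ?_)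
  have hsec : (fun y => s.indicator (fun z => f z.1) (x, y))
      = (Prod.mk x ⁻¹' s).indicator (fun _ => f x) := rfl
  simp only [hsec, integral_indicator_const _ (measurable_prodMk_left hs), smul_eq_mul]

lemma cdf_map_apply {Ω : Type*} [MeasurableSpace Ω] {μ : Measure Ω} [IsProbabilityMeasure μ]
    {Y : Ω → ℝ} (hY : Measurable Y) (t : ℝ) :
    cdf (μ.map Y) t = μ.real {ω | Y ω ≤ t} := by
  have := Measure.isProbabilityMeasure_map (μ := μ) hY.aemeasurable
  rw [cdf_eq_real, map_measureReal_apply hY measurableSet_Iic]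
  rfl

lemma norm_cdf_le_one (ρ : Measure ℝ) (t : ℝ) : ‖cdf ρ t‖ ≤ 1 := by
  rw [Real.norm_of_nonneg (cdf_nonneg ρ t)]
  exact cdf_le_one ρ t

section PairwiseComparison

variable {α : Type*} [MeasurableSpace α]

lemma measureReal_snd_lt_eq_le {ν : Measure (α × ℝ)} (hatom : ∀ t, ν {p | p.2 = t} = 0)
    (t : ℝ) : ν.real {p | p.2 < t} = ν.real {p | p.2 ≤ t} := by
  have hsplit : {p : α × ℝ | p.2 ≤ t} = {p | p.2 < t} ∪ {p | p.2 = t} := by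
    ext p; exact le_iff_lt_or_eq (a := p.2)
  rw [hsplit, Measure.real, Measure.real,
    measure_congr (union_ae_eq_left_of_ae_eq_empty (ae_eq_empty.mpr (hatom t)))]

lemma integral_prod_self_ite_snd_le {ν : Measure (α × ℝ)} [IsFiniteMeasure ν]
    (hatom : ∀ t, ν {p | p.2 = t} = 0) {g : α → ℝ} (hg : Integrable (fun p => g p.1) ν) :
    ∫ r, (if r.2.2 ≤ r.1.2 then g r.1.1 else g r.2.1) ∂(ν.prod ν)
      = 2 * ∫ p, ν.real {q | q.2 ≤ p.2} * g p.1 ∂ν := by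
  set s : Set ((α × ℝ) × (α × ℝ)) := {r | r.2.2 ≤ r.1.2}
  have hs : MeasurableSet s :=
    measurableSet_le (measurable_snd.comp measurable_snd) (measurable_snd.comp measurable_fst)
  have hsplit : (fun r : (α × ℝ) × (α × ℝ) => if r.2.2 ≤ r.1.2 then g r.1.1 else g r.2.1)
      = fun r => s.indicator (fun r => g r.1.1) r
          + sᶜ.indicator (fun r => g r.2.1) r := by
    ext r
    by_cases hr : r.2.2 ≤ r.1.2 <;> simp [s, hr]
  have hlose : ∫ r, sᶜ.indicator (fun r => g r.2.1) r ∂(ν.prod ν)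
      = ∫ r, (Prod.swap ⁻¹' sᶜ).indicator (fun r => g r.1.1) r ∂(ν.prod ν) :=
    (integral_prod_swap _).symm
  rw [hsplit, integral_add ((hg.comp_fst ν).indicator hs) ((hg.comp_snd ν).indicator hs.compl),
    hlose, integral_prod_indicator_comp_fst_s14 hs hg,
    integral_prod_indicator_comp_fst_s14 (hs.compl.preimage measurable_swap) hg, two_mul]
  congr 1
  refine integral_congr_ae (ae_of_all _ fun p => ?_)
  have hsec : Prod.mk p ⁻¹' (Prod.swap ⁻¹' sᶜ) = {q | q.2 < p.2} := by
    ext q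
    simp [s]
  simp only [hsec, measureReal_snd_lt_eq_le hatom]

variable {Ω : Type*} [MeasurableSpace Ω] {μ : Measure Ω} [IsProbabilityMeasure μ]
  {X X' : Ω → α} {Y Y' : Ω → ℝ}

lemma integral_comp_ite_le (hX : Measurable X) (hY : Measurable Y) (hX' : Measurable X')
    (hY' : Measurable Y')
    (hindep : IndepFun (fun ω => (X ω, Y ω)) (fun ω => (X' ω, Y' ω)) μ)
    (hident : μ.map (fun ω => (X ω, Y ω)) = μ.map (fun ω => (X' ω, Y' ω)))
    (hatomless : ∀ t : ℝ, μ {ω | Y ω = t} = 0) {g : α → ℝ} (hg : Measurable g)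
    (hgX : Integrable (fun ω => g (X ω)) μ) :
    ∫ ω, g (if Y' ω ≤ Y ω then X ω else X' ω) ∂μ
      = 2 * ∫ ω, cdf (μ.map Y) (Y ω) * g (X ω) ∂μ := by
  have hXY : Measurable fun ω => (X ω, Y ω) := hX.prodMk hY
  have hXY' : Measurable fun ω => (X' ω, Y' ω) := hX'.prodMk hY'
  set ν := μ.map fun ω => (X ω, Y ω)
  have hmap : μ.map (fun ω => ((X ω, Y ω), (X' ω, Y' ω))) = ν.prod ν := by
    rw [hindep.map_prod_eq_prod_map_map hXY.aemeasurable hXY'.aemeasurable, ← hident]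
  have hν_atom : ∀ t, ν {p | p.2 = t} = 0 := fun t => by
    rw [Measure.map_apply hXY (measurableSet_eq_fun measurable_snd measurable_const)]
    exact hatomless t
  have hν_cdf : ∀ t, ν.real {q | q.2 ≤ t} = cdf (μ.map Y) t := fun t => by
    rw [cdf_map_apply hY,
      map_measureReal_apply hXY (measurableSet_le measurable_snd measurable_const)]
    rfl
  have hgν : Integrable (fun p => g p.1) ν :=
    (integrable_map_measure (hg.comp measurable_fst).aestronglyMeasurable
      hXY.aemeasurable).mpr hgX
  have hwinner : Measurable fun r : (α × ℝ) × (α × ℝ) =>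
      if r.2.2 ≤ r.1.2 then g r.1.1 else g r.2.1 :=
    Measurable.ite (measurableSet_le (measurable_snd.comp measurable_snd)
      (measurable_snd.comp measurable_fst)) (hg.comp (measurable_fst.comp measurable_fst))
      (hg.comp (measurable_fst.comp measurable_snd))
  calc ∫ ω, g (if Y' ω ≤ Y ω then X ω else X' ω) ∂μ
      = ∫ r, (if r.2.2 ≤ r.1.2 then g r.1.1 else g r.2.1) ∂(ν.prod ν) := by
        rw [← hmap, integral_map (hXY.prodMk hXY').aemeasurable hwinner.aestronglyMeasurable]
        simp only [apply_ite g]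
    _ = 2 * ∫ p, ν.real {q | q.2 ≤ p.2} * g p.1 ∂ν :=
        integral_prod_self_ite_snd_le hν_atom hgν
    _ = 2 * ∫ ω, cdf (μ.map Y) (Y ω) * g (X ω) ∂μ := by
        have hmeas : Measurable fun p : α × ℝ => cdf (μ.map Y) p.2 * g p.1 :=
          ((monotone_cdf _).measurable.comp measurable_snd).mul (hg.comp measurable_fst)
        simp only [hν_cdf]
        rw [integral_map hXY.aemeasurable hmeas.aestronglyMeasurable]

lemma integral_comp_ite_le_swap (hX : Measurable X) (hY : Measurable Y) (hX' : Measurable X')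
    (hY' : Measurable Y')
    (hindep : IndepFun (fun ω => (X ω, Y ω)) (fun ω => (X' ω, Y' ω)) μ)
    (hident : μ.map (fun ω => (X ω, Y ω)) = μ.map (fun ω => (X' ω, Y' ω)))
    (hatomless : ∀ t : ℝ, μ {ω | Y ω = t} = 0) {g : α → ℝ} (hg : Measurable g)
    (hgX : Integrable (fun ω => g (X ω)) μ) :
    ∫ ω, g (if Y' ω ≤ Y ω then X' ω else X ω) ∂μ
      = 2 * ∫ ω, g (X ω) ∂μ - 2 * ∫ ω, cdf (μ.map Y) (Y ω) * g (X ω) ∂μ := by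
  have hgXX' : IdentDistrib (fun ω => g (X ω)) (fun ω => g (X' ω)) μ μ :=
    (IdentDistrib.mk (hX.prodMk hY).aemeasurable (hX'.prodMk hY').aemeasurable hident).comp
      (hg.comp measurable_fst)
  have hgX' := hgXX'.integrable_snd hgX
  have hwinner : Integrable (fun ω => g (if Y' ω ≤ Y ω then X ω else X' ω)) μ :=
    (Integrable.piecewise (measurableSet_le hY' hY) hgX.integrableOn hgX'.integrableOn).congr
      (ae_of_all _ fun ω => by simp [Set.piecewise, apply_ite g])
  have hsum : ∀ ω, g (if Y' ω ≤ Y ω then X' ω else X ω)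
      = g (X ω) + g (X' ω) - g (if Y' ω ≤ Y ω then X ω else X' ω) := fun ω => by
    split_ifs <;> ring
  rw [integral_congr_ae (ae_of_all _ hsum),
    integral_sub (f := fun ω => g (X ω) + g (X' ω)) (hgX.add hgX') hwinner,
    integral_add hgX hgX', ← hgXX'.integral_eq,
    integral_comp_ite_le hX hY hX' hY' hindep hident hatomless hg hgX]
  ring

end PairwiseComparison

theorem stmt_14_general
    {Ω : Type*} [MeasurableSpace Ω] {μ : Measure Ω} [IsProbabilityMeasure μ]
    {d : ℕ} {X X' : Ω → (Fin d → ℝ)} {Y Y' : Ω → ℝ}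
    (hX : Measurable X) (hY : Measurable Y) (hX' : Measurable X') (hY' : Measurable Y')
    (hindep : IndepFun (fun ω => (X ω, Y ω)) (fun ω => (X' ω, Y' ω)) μ)
    (hident : μ.map (fun ω => (X ω, Y ω)) = μ.map (fun ω => (X' ω, Y' ω)))
    (hatomless : ∀ t : ℝ, μ {ω | Y ω = t} = 0)
    (φ : ℝ → ℝ)
    (h : (Fin d → ℝ) → ℝ) (hh : Measurable h)
    (F : ℝ → ℝ) (hFdef : ∀ t, F t = (μ {ω | Y ω ≤ t}).toReal)
    (i1 : Integrable (fun ω => φ (F (Y ω))) μ)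
    (i2 : Integrable (fun ω => φ (F (h (X ω)))) μ)
    (i5 : Integrable (fun ω => deriv φ (F (h (X ω)))) μ)
    (lam : ℝ) :
    ∫ ω, (φ (F (Y ω)) - φ (F (h (X ω)))
        - (F (Y ω) - F (h (X ω))) * deriv φ (F (h (X ω)))) ∂μ
      = (∫ ω, φ (F (Y ω)) ∂μ)
        - (∫ ω, ((lam - F (h (X ω))) * deriv φ (F (h (X ω))) + φ (F (h (X ω)))) ∂μ)
        - ((1 - lam) / 2)
            * (∫ ω, deriv φ (F (h (if Y' ω ≤ Y ω then X ω else X' ω))) ∂μ)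
        + (lam / 2) * ∫ ω, deriv φ (F (h (if Y' ω ≤ Y ω then X' ω else X ω))) ∂μ := by
  obtain rfl : F = cdf (μ.map Y) := funext fun t => (hFdef t).trans (cdf_map_apply hY t).symm
  set F := cdf (μ.map Y)
  set g : (Fin d → ℝ) → ℝ := fun x => deriv φ (F (h x))
  have hF_meas : Measurable F := (monotone_cdf _).measurable
  have hg : Measurable g := (measurable_deriv φ).comp (hF_meas.comp hh)
  have hgX_lam : Integrable (fun ω => lam * g (X ω)) μ := i5.const_mul lam
  have hYg : Integrable (fun ω => F (Y ω) * g (X ω)) μ :=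
    i5.bdd_mul (hF_meas.comp hY).aestronglyMeasurable (ae_of_all _ fun _ => norm_cdf_le_one _ _)
  have hB : Integrable (fun ω => (lam - F (h (X ω))) * g (X ω) + φ (F (h (X ω)))) μ := by
    refine (i5.bdd_mul (c := ‖lam‖ + 1) ?_ (ae_of_all _ fun _ => ?_)).add i2
    · exact ((hF_meas.comp (hh.comp hX)).const_sub lam).aestronglyMeasurable
    · exact (norm_sub_le _ _).trans (add_le_add_right (norm_cdf_le_one _ _) _)
  calc ∫ ω, (φ (F (Y ω)) - φ (F (h (X ω))) - (F (Y ω) - F (h (X ω))) * g (X ω)) ∂μ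
      = ∫ ω, (φ (F (Y ω)) - ((lam - F (h (X ω))) * g (X ω) + φ (F (h (X ω))))
          + (lam * g (X ω) - F (Y ω) * g (X ω))) ∂μ :=
        integral_congr_ae (ae_of_all _ fun ω => by ring)
    _ = (∫ ω, φ (F (Y ω)) ∂μ)
          - (∫ ω, ((lam - F (h (X ω))) * g (X ω) + φ (F (h (X ω)))) ∂μ)
          + (lam * ∫ ω, g (X ω) ∂μ - ∫ ω, F (Y ω) * g (X ω) ∂μ) := by
        rw [integral_add, integral_sub i1 hB, integral_sub hgX_lam hYg, integral_const_mul]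
        exacts [i1.sub hB, hgX_lam.sub hYg]
    _ = _ := by
        rw [integral_comp_ite_le hX hY hX' hY' hindep hident hatomless hg i5,
          integral_comp_ite_le_swap hX hY hX' hY' hindep hident hatomless hg i5]
        ring

/-- For every `λ ∈ ℝ` and measurable `h` (all integrals finite), the
transformed Bregman risk `R_CDF(h) = E[d_φ(F_Y(Y), F_Y(h(X)))]` equals
`E[φ(F_Y(Y))] - E[(λ - F_Y(h(X))) φ'(F_Y(h(X))) + φ(F_Y(h(X)))]
  - ((1-λ)/2) E[φ'(F_Y(h(X⁺)))] + (λ/2) E[φ'(F_Y(h(X⁻)))]`,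
so the corresponding sample-average estimator is unbiased for every `λ`. -/
theorem stmt_14
    {Ω : Type*} [MeasurableSpace Ω] {μ : Measure Ω} [IsProbabilityMeasure μ]
    {d : ℕ} {X X' : Ω → (Fin d → ℝ)} {Y Y' : Ω → ℝ}
    (hX : Measurable X) (hY : Measurable Y) (hX' : Measurable X') (hY' : Measurable Y')
    (hindep : IndepFun (fun ω => (X ω, Y ω)) (fun ω => (X' ω, Y' ω)) μ)
    (hident : μ.map (fun ω => (X ω, Y ω)) = μ.map (fun ω => (X' ω, Y' ω)))
    (hatomless : ∀ t : ℝ, μ {ω | Y ω = t} = 0)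
    (φ : ℝ → ℝ) (hφdiff : Differentiable ℝ φ) (hφconv : ConvexOn ℝ Set.univ φ)
    (h : (Fin d → ℝ) → ℝ) (hh : Measurable h)
    (F : ℝ → ℝ) (hFdef : ∀ t, F t = (μ {ω | Y ω ≤ t}).toReal)
    (i1 : Integrable (fun ω => φ (F (Y ω))) μ)
    (i2 : Integrable (fun ω => φ (F (h (X ω)))) μ)
    (i3 : Integrable (fun ω => F (h (X ω)) * deriv φ (F (h (X ω)))) μ)
    (i4 : Integrable (fun ω => F (Y ω) * deriv φ (F (h (X ω)))) μ)
    (i5 : Integrable (fun ω => deriv φ (F (h (X ω)))) μ)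
    (i6 : Integrable (fun ω => deriv φ (F (h (if Y' ω ≤ Y ω then X ω else X' ω)))) μ)
    (i7 : Integrable (fun ω => deriv φ (F (h (if Y' ω ≤ Y ω then X' ω else X ω)))) μ)
    (lam : ℝ) :
    ∫ ω, (φ (F (Y ω)) - φ (F (h (X ω)))
        - (F (Y ω) - F (h (X ω))) * deriv φ (F (h (X ω)))) ∂μ
      = (∫ ω, φ (F (Y ω)) ∂μ)
        - (∫ ω, ((lam - F (h (X ω))) * deriv φ (F (h (X ω))) + φ (F (h (X ω)))) ∂μ)
        - ((1 - lam) / 2)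
            * (∫ ω, deriv φ (F (h (if Y' ω ≤ Y ω then X ω else X' ω))) ∂μ)
        + (lam / 2) * ∫ ω, deriv φ (F (h (if Y' ω ≤ Y ω then X' ω else X ω))) ∂μ :=
  stmt_14_general hX hY hX' hY' hindep hident hatomless φ h hh F hFdef i1 i2 i5 lam
end
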